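/- Let f : W → [0,1] be a Borel measurable function and D ⊆ W a Gδ set. Then val↓(Γ(max(f, 1_D))) = inf over open sets O ⊇ D of val↓(Γ(max(f, 1_O))), where val↓ denotes the lower value sup_σ inf_τ of the expected payoff. -/

import Mathlib

open MeasureTheory Filter

open Topology
set_option linter.unusedSectionVars false
set_option linter.unnecessarySimpa false

abbrev Play (Z : Type) : Type := ℕ → Z

abbrev Strategy (Z M : Type) : Type := List Z → PMF M

noncomputable def cylProb {X Y : Type} (σ : Strategy (X × Y) X)
    (τ : Strategy (X × Y) Y) (p : List (X × Y)) : ENNReal :=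
  ∏ i : Fin p.length,
    σ (p.take i.1) (p.get i).1 * τ (p.take i.1) (p.get i).2

def cyl {Z : Type} (p : List Z) : Set (Play Z) :=
  {w | ∀ i : Fin p.length, w i.1 = p.get i}

def IsInduced {X Y : Type} [MeasurableSpace X] [MeasurableSpace Y]
    (σ : Strategy (X × Y) X) (τ : Strategy (X × Y) Y)
    (μ : Measure (Play (X × Y))) : Prop :=
  IsProbabilityMeasure μ ∧ ∀ p : List (X × Y), μ (cyl p) = cylProb σ τ p

namespace BWAux

noncomputable section
open Classical

/-! ### Generic cylinder infrastructure -/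

section Cyl

variable {Z : Type}

/-- finite history of a play -/
def hist (w : Play Z) (n : ℕ) : List Z := List.ofFn (fun i : Fin n => w i)

@[simp] lemma length_hist (w : Play Z) (n : ℕ) : (hist w n).length = n := by
  simp [hist]

@[simp] lemma hist_getElem (w : Play Z) (n : ℕ) (i : ℕ) (h : i < (hist w n).length) :
    (hist w n)[i] = w i := by
  simp [hist]

lemma hist_take (w : Play Z) (m n : ℕ) (h : m ≤ n) :
    (hist w n).take m = hist w m := by
  apply List.ext_getElem <;> simp [Nat.min_eq_left, h, Nat.lt_of_lt_of_le]

lemma getElem_eq_of_eq {l l' : List Z} (h : l = l') (i : ℕ) (hi : i < l.length) :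
    l[i] = l'[i]'(h ▸ hi) := by subst h; rfl

lemma mem_cyl_iff_hist (w : Play Z) (p : List Z) :
    w ∈ cyl p ↔ hist w p.length = p := by
  constructor
  · intro hw
    apply List.ext_getElem (by simp)
    intro i h1 h2
    simpa using (hw ⟨i, by simpa using h1⟩)
  · intro h i
    have := getElem_eq_of_eq h i.1 (by simpa using i.2)
    simpa [List.get_eq_getElem] using this

lemma mem_cyl_hist (w : Play Z) (n : ℕ) : w ∈ cyl (hist w n) := by
  rw [mem_cyl_iff_hist]; simp

lemma cyl_anti {p q : List Z} (h : p <+: q) : cyl q ⊆ cyl p := by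
  intro w hw
  rw [mem_cyl_iff_hist] at hw ⊢
  rcases h with ⟨t, rfl⟩
  have hl : p.length ≤ (p ++ t).length := by simp
  rw [← hist_take w _ _ hl, hw]
  simpa using (List.prefix_iff_eq_take.1 (List.prefix_append p t)).symm

lemma prefix_or_prefix_of_mem_cyl {p q : List Z} {w : Play Z}
    (hp : w ∈ cyl p) (hq : w ∈ cyl q) : p <+: q ∨ q <+: p := by
  rw [mem_cyl_iff_hist] at hp hq
  rcases le_total p.length q.length with h | h
  · left; rw [← hp, ← hq, ← hist_take w _ _ h]; exact List.take_prefix _ _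
  · right; rw [← hp, ← hq, ← hist_take w _ _ h]; exact List.take_prefix _ _

lemma cyl_disjoint {p q : List Z} (h1 : ¬ p <+: q) (h2 : ¬ q <+: p) :
    cyl p ∩ cyl q = ∅ := by
  ext w; simp only [Set.mem_inter_iff, Set.mem_empty_iff_false, iff_false]
  rintro ⟨hp, hq⟩
  rcases prefix_or_prefix_of_mem_cyl hp hq with h | h
  · exact h1 h
  · exact h2 h

lemma cyl_nonempty [Nonempty Z] (p : List Z) : (cyl p).Nonempty := by
  refine ⟨fun i => if h : i < p.length then p[i] else Classical.arbitrary Z, ?_⟩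
  intro i
  simp [i.2]

@[simp] lemma cyl_nil : cyl ([] : List Z) = Set.univ := by
  ext w; simp [cyl]

/-- prepend a finite history to a play -/
def prepend (p : List Z) (w : Play Z) : Play Z :=
  fun i => if h : i < p.length then p[i] else w (i - p.length)

@[simp] lemma prepend_nil (w : Play Z) : prepend [] w = w := by
  funext i; simp [prepend]

lemma prepend_mem_cyl (p : List Z) (w : Play Z) : prepend p w ∈ cyl p := by
  intro i; simp [prepend, i.2, List.get_eq_getElem]

lemma prepend_prepend (p q : List Z) (w : Play Z) :
    prepend p (prepend q w) = prepend (p ++ q) w := by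
  funext i
  simp only [prepend, List.length_append]
  rcases lt_trichotomy i p.length with h | h | h
  · rw [dif_pos h, dif_pos (by omega), List.getElem_append_left h]
  · subst h
    by_cases hq : 0 < q.length
    · rw [dif_neg (by omega), dif_pos (by omega), dif_pos (by omega)]
      simp [List.getElem_append_right (le_refl p.length)]
    · rw [dif_neg (by omega), dif_neg (by omega), dif_neg (by omega)]
      congr 1; omega
  · rw [dif_neg (by omega)]
    by_cases h2 : i - p.length < q.length
    · rw [dif_pos h2, dif_pos (by omega)]
      rw [List.getElem_append_right (by omega)]
    · rw [dif_neg h2, dif_neg (by omega)]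
      congr 1
      omega

lemma prepend_mem_cyl_append {p q : List Z} {w : Play Z} :
    prepend p w ∈ cyl (p ++ q) ↔ w ∈ cyl q := by
  simp only [mem_cyl_iff_hist]
  constructor
  · intro h
    apply List.ext_getElem (by simp)
    intro i h1 h2
    have := getElem_eq_of_eq h (p.length + i) (by simp; omega)
    simpa [prepend, List.getElem_append_right (Nat.le_add_right _ _)] using this
  · intro h
    apply List.ext_getElem (by simp)
    intro i h1 h2
    simp only [hist_getElem, prepend]
    by_cases hip : i < p.length
    · rw [dif_pos hip, List.getElem_append_left hip]
    · rw [dif_neg hip, List.getElem_append_right (by omega)]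
      have := getElem_eq_of_eq h (i - p.length) (by simp at h1 ⊢; omega)
      simpa using this

/-- dropping a prefix of a play -/
def dropPlay (p : List Z) (w : Play Z) : Play Z := fun i => w (p.length + i)

lemma prepend_dropPlay {p : List Z} {w : Play Z} (hw : w ∈ cyl p) :
    prepend p (dropPlay p w) = w := by
  funext i
  simp only [prepend, dropPlay]
  by_cases h : i < p.length
  · rw [dif_pos h]
    simpa [List.get_eq_getElem] using (hw ⟨i, h⟩).symm
  · rw [dif_neg h]
    congr 1; omega

lemma dropPlay_mem_cyl {p q : List Z} {w : Play Z} (hw : w ∈ cyl (p ++ q)) :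
    dropPlay p w ∈ cyl q := by
  intro i
  have := hw ⟨p.length + i.1, by simp [i.2]⟩
  simpa [dropPlay, List.get_eq_getElem, List.getElem_append_right (Nat.le_add_right _ _)] using this

lemma cyl_append_subset_iff {p q : List Z} {V : Set (Play Z)} :
    cyl (p ++ q) ⊆ V ↔ cyl q ⊆ prepend p ⁻¹' V := by
  constructor
  · intro h w hw
    exact h (prepend_mem_cyl_append.2 hw)
  · intro h v hv
    have h1 : v ∈ cyl p := cyl_anti ⟨q, rfl⟩ hv
    have := h (dropPlay_mem_cyl hv)
    simpa [Set.mem_preimage, prepend_dropPlay h1] using this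

end Cyl

section Top

variable {Z : Type} [Fintype Z] [MeasurableSpace Z] [MeasurableSingletonClass Z]
  [TopologicalSpace Z] [DiscreteTopology Z]

lemma allMeasurable (S : Set Z) : MeasurableSet S := S.toFinite.measurableSet

lemma measurableSet_cyl (p : List Z) : MeasurableSet (cyl p) := by
  have : cyl p = ⋂ i : Fin p.length, (fun w : Play Z => w i.1) ⁻¹' {p.get i} := by
    ext w; simp [cyl, Set.mem_iInter]
  rw [this]
  exact MeasurableSet.iInter fun i => (measurable_pi_apply _) (measurableSet_singleton _)

lemma isOpen_cyl (p : List Z) : IsOpen (cyl p) := by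
  have : cyl p = ⋂ i : Fin p.length, (fun w : Play Z => w i.1) ⁻¹' {p.get i} := by
    ext w; simp [cyl, Set.mem_iInter]
  rw [this]
  exact isOpen_iInter_of_finite fun i => (continuous_apply _).isOpen_preimage _ (isOpen_discrete _)

lemma isClosed_cyl (p : List Z) : IsClosed (cyl p) := by
  have : (cyl p)ᶜ = ⋃ i : Fin p.length, (fun w : Play Z => w i.1) ⁻¹' {p.get i}ᶜ := by
    ext w; simp [cyl]
  constructor
  rw [this]
  exact isOpen_iUnion fun i => (continuous_apply _).isOpen_preimage _ (isOpen_discrete _)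

lemma mem_cyl_hist_iff {w a : Play Z} {n : ℕ} :
    w ∈ cyl (hist a n) ↔ ∀ i < n, w i = a i := by
  rw [mem_cyl_iff_hist]
  constructor
  · intro h i hi
    have := getElem_eq_of_eq h i (by simpa using hi)
    simpa using this
  · intro h
    apply List.ext_getElem (by simp)
    intro i h1 h2
    simp only [hist_getElem]
    exact h i (by simpa using h2)

lemma exists_cyl_subset {U : Set (Play Z)} (hU : IsOpen U) {a : Play Z} (ha : a ∈ U) :
    ∃ n, cyl (hist a n) ⊆ U := by
  obtain ⟨I, u, hu, hsub⟩ := isOpen_pi_iff.1 hU a ha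
  refine ⟨(I.sup id) + 1, fun w hw => hsub ?_⟩
  intro i hi
  have : w i = a i := mem_cyl_hist_iff.1 hw i (by
    have h3 : i ≤ I.sup id := by simpa using Finset.le_sup (f := id) hi
    omega)
  rw [this]
  exact (hu i hi).2

lemma open_eq_iUnion_cyl {U : Set (Play Z)} (hU : IsOpen U) :
    U = ⋃ p ∈ {p : List Z | cyl p ⊆ U}, cyl p := by
  ext w
  simp only [Set.mem_iUnion, Set.mem_setOf_eq]
  constructor
  · intro hw
    obtain ⟨n, hn⟩ := exists_cyl_subset hU hw
    exact ⟨hist w n, hn, mem_cyl_hist w n⟩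
  · rintro ⟨p, hp, hwp⟩
    exact hp hwp

lemma isOpen_measurableSet {U : Set (Play Z)} (hU : IsOpen U) : MeasurableSet U := by
  rw [open_eq_iUnion_cyl hU]
  exact MeasurableSet.biUnion (Set.to_countable _) (fun p _ => measurableSet_cyl p)

lemma isGδ_measurableSet {S : Set (Play Z)} (hS : IsGδ S) : MeasurableSet S := by
  obtain ⟨T, hT1, hT2, rfl⟩ := hS
  by_cases h : T.Nonempty
  · exact MeasurableSet.sInter hT2 (fun t ht => isOpen_measurableSet (hT1 t ht))
  · rw [Set.not_nonempty_iff_eq_empty] at h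
    subst h
    simp

lemma isPiSystem_cyl : IsPiSystem {s : Set (Play Z) | ∃ p : List Z, s = cyl p} := by
  rintro s ⟨p, rfl⟩ t ⟨q, rfl⟩ hne
  obtain ⟨w, hw1, hw2⟩ := hne
  rcases prefix_or_prefix_of_mem_cyl hw1 hw2 with h | h
  · exact ⟨q, by rw [Set.inter_eq_self_of_subset_right (cyl_anti h)]⟩
  · exact ⟨p, by rw [Set.inter_eq_self_of_subset_left (cyl_anti h)]⟩

lemma pi_eq_generateFrom_cyl :
    (MeasurableSpace.pi : MeasurableSpace (Play Z)) =
      MeasurableSpace.generateFrom {s : Set (Play Z) | ∃ p : List Z, s = cyl p} := by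
  apply le_antisymm
  · refine iSup_le fun i => ?_
    intro s hs
    rw [MeasurableSpace.measurableSet_comap] at hs
    obtain ⟨S, -, rfl⟩ := hs
    have : (fun w : Play Z => w i) ⁻¹' S =
        ⋃ p ∈ {p : List Z | p.length = i + 1 ∧ ∃ h : i < p.length, p[i] ∈ S}, cyl p := by
      ext w
      simp only [Set.mem_preimage, Set.mem_iUnion, Set.mem_setOf_eq]
      constructor
      · intro hw
        exact ⟨hist w (i+1), ⟨by simp, by simp, by simpa using hw⟩, mem_cyl_hist w (i+1)⟩
      · rintro ⟨p, ⟨hl, hi, hS⟩, hwp⟩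
        have := mem_cyl_iff_hist _ _ |>.1 hwp
        have h2 := getElem_eq_of_eq this i (by simpa using hi)
        simp only [hist_getElem] at h2
        rwa [h2]
    rw [this]
    exact MeasurableSet.biUnion (Set.to_countable _)
      (fun p _ => MeasurableSpace.measurableSet_generateFrom ⟨p, rfl⟩)
  · exact MeasurableSpace.generateFrom_le (by rintro s ⟨p, rfl⟩; exact measurableSet_cyl p)

/-- Uniqueness of measures from cylinder probabilities. -/
lemma measure_ext_cyl {μ ν : Measure (Play Z)} [IsFiniteMeasure μ] [IsFiniteMeasure ν]
    (h : ∀ p : List Z, μ (cyl p) = ν (cyl p)) : μ = ν := by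
  refine MeasureTheory.ext_of_generate_finite _ pi_eq_generateFrom_cyl isPiSystem_cyl ?_ ?_
  · rintro s ⟨p, rfl⟩; exact h p
  · simpa using h []

lemma measurable_prepend (p : List Z) : Measurable (prepend p) := by
  apply measurable_pi_iff.2
  intro i
  by_cases h : i < p.length
  · simpa [prepend, h] using measurable_const
  · simpa [prepend, h] using measurable_pi_apply (i - p.length)

lemma continuous_prepend (p : List Z) : Continuous (prepend p) := by
  apply continuous_pi
  intro i
  by_cases h : i < p.length
  · simpa [prepend, h] using continuous_const
  · simpa [prepend, h] using continuous_apply (i - p.length)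

end Top

section Top2

variable {Z : Type} [Fintype Z] [MeasurableSpace Z] [MeasurableSingletonClass Z]
  [TopologicalSpace Z] [DiscreteTopology Z]

/-! ### payoff functions -/

/-- payoff with bonus set -/
def payoff (f : Play Z → ℝ) (S : Set (Play Z)) : Play Z → ℝ :=
  fun w => max (f w) (S.indicator 1 w)

lemma payoff_mem_Icc {f : Play Z → ℝ} (hfb : ∀ w, f w ∈ Set.Icc (0:ℝ) 1) (S : Set (Play Z))
    (w : Play Z) : payoff f S w ∈ Set.Icc (0:ℝ) 1 := by
  constructor
  · exact le_max_of_le_left (hfb w).1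
  · apply max_le (hfb w).2
    by_cases h : w ∈ S <;> simp [Set.indicator, h]

lemma measurable_payoff {f : Play Z → ℝ} (hfm : Measurable f) {S : Set (Play Z)}
    (hS : MeasurableSet S) : Measurable (payoff f S) :=
  hfm.max (measurable_const.indicator hS)

lemma payoff_mono {f : Play Z → ℝ} {S T : Set (Play Z)} (h : S ⊆ T) (w : Play Z) :
    payoff f S w ≤ payoff f T w := by
  apply max_le_max (le_refl _)
  by_cases hw : w ∈ S
  · simp [Set.indicator, hw, h hw]
  · simp [Set.indicator, hw]
    by_cases hw2 : w ∈ T <;> simp [hw2]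

lemma payoff_eq_f {f : Play Z → ℝ} (hfb : ∀ w, f w ∈ Set.Icc (0:ℝ) 1) {S : Set (Play Z)}
    {w : Play Z} (hw : w ∉ S) : payoff f S w = f w := by
  simp [payoff, Set.indicator, hw, (hfb w).1]

lemma payoff_eq_one {f : Play Z → ℝ} (hfb : ∀ w, f w ∈ Set.Icc (0:ℝ) 1) {S : Set (Play Z)}
    {w : Play Z} (hw : w ∈ S) : payoff f S w = 1 := by
  simp [payoff, Set.indicator, hw]
  exact (hfb w).2

lemma payoff_congr {f : Play Z → ℝ} {S T : Set (Play Z)} {w : Play Z}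
    (h : w ∈ S ↔ w ∈ T) : payoff f S w = payoff f T w := by
  by_cases hw : w ∈ S
  · simp [payoff, Set.indicator, hw, h.1 hw]
  · have hw2 : w ∉ T := fun hw2 => hw (h.2 hw2)
    simp [payoff, Set.indicator, hw, hw2]

/-! ### minimal entry positions -/

/-- minimal entry extensions: from position `p`, the minimal extensions `r` such that the
cylinder of `p ++ r` is contained in `V`. -/
def BarAt (p : List Z) (V : Set (Play Z)) : Set (List Z) :=
  {r | cyl (p ++ r) ⊆ V ∧ ∀ n < r.length, ¬ cyl (p ++ r.take n) ⊆ V}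

lemma barAt_antichain {p : List Z} {V : Set (Play Z)} {r r' : List Z}
    (h : r ∈ BarAt p V) (h' : r' ∈ BarAt p V) (hle : r <+: r') : r = r' := by
  by_contra hne
  have hlt : r.length < r'.length := by
    rcases Nat.lt_or_ge r.length r'.length with h1 | h1
    · exact h1
    · exact absurd (List.IsPrefix.eq_of_length hle
        (le_antisymm hle.length_le h1)) hne
  have := h'.2 r.length hlt
  rw [← List.prefix_iff_eq_take.1 hle] at this
  exact this h.1

lemma exists_bar_prefix {p : List Z} {V : Set (Play Z)} {r : List Z}
    (h : cyl (p ++ r) ⊆ V) : ∃ r₀ ∈ BarAt p V, r₀ <+: r := by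
  have H : ∃ n, cyl (p ++ r.take n) ⊆ V := ⟨r.length, by simpa [List.take_length] using h⟩
  set n := Nat.find H with hn
  have hspec : cyl (p ++ r.take n) ⊆ V := Nat.find_spec H
  have hle : n ≤ r.length := Nat.find_le (by simpa [List.take_length] using h)
  refine ⟨r.take n, ⟨hspec, ?_⟩, List.take_prefix n r⟩
  intro m hm
  rw [List.length_take] at hm
  have hmn : m < n := lt_of_lt_of_le hm (min_le_left _ _)
  rw [List.take_take, min_eq_left (le_of_lt hmn)]
  exact Nat.find_min H hmn

lemma barAt_pairwise_disjoint {p : List Z} {V : Set (Play Z)} {r r' : List Z}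
    (h : r ∈ BarAt p V) (h' : r' ∈ BarAt p V) (hne : r ≠ r') : cyl r ∩ cyl r' = ∅ := by
  apply cyl_disjoint
  · intro hle; exact hne (barAt_antichain h h' hle)
  · intro hle; exact hne (barAt_antichain h' h hle).symm

/-- the set of continuation plays that enter `V` (relative to the position `p`) -/
def HitAt (p : List Z) (V : Set (Play Z)) : Set (Play Z) := ⋃ r ∈ BarAt p V, cyl r

def MissAt (p : List Z) (V : Set (Play Z)) : Set (Play Z) := (HitAt p V)ᶜ

lemma measurableSet_hitAt (p : List Z) (V : Set (Play Z)) : MeasurableSet (HitAt p V) :=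
  MeasurableSet.biUnion (Set.to_countable _) (fun r _ => measurableSet_cyl r)

lemma measurableSet_missAt (p : List Z) (V : Set (Play Z)) : MeasurableSet (MissAt p V) :=
  (measurableSet_hitAt p V).compl

lemma hist_prepend (p : List Z) (w : Play Z) (k : ℕ) :
    hist (prepend p w) (p.length + k) = p ++ hist w k := by
  apply List.ext_getElem (by simp)
  intro i h1 h2
  simp only [hist_getElem, prepend]
  by_cases h : i < p.length
  · rw [dif_pos h, List.getElem_append_left h]
  · rw [dif_neg h, List.getElem_append_right (by omega)]
    simp

lemma mem_hitAt_iff {p : List Z} {V : Set (Play Z)} {w : Play Z} :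
    w ∈ HitAt p V ↔ ∃ n, cyl (p ++ hist w n) ⊆ V := by
  constructor
  · rintro hw
    simp only [HitAt, Set.mem_iUnion] at hw
    obtain ⟨r, hr, hwr⟩ := hw
    exact ⟨r.length, by rw [(mem_cyl_iff_hist w r).1 hwr]; exact hr.1⟩
  · rintro ⟨n, hn⟩
    obtain ⟨r₀, hr₀, hpre⟩ := exists_bar_prefix hn
    simp only [HitAt, Set.mem_iUnion]
    exact ⟨r₀, hr₀, cyl_anti hpre (mem_cyl_hist w n)⟩

lemma mem_hitAt_of_open {p : List Z} {V : Set (Play Z)} (hV : IsOpen V) {w : Play Z}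
    (hw : prepend p w ∈ V) : w ∈ HitAt p V := by
  obtain ⟨m, hm⟩ := exists_cyl_subset hV hw
  rw [mem_hitAt_iff]
  refine ⟨m, ?_⟩
  have h1 : hist (prepend p w) m <+: hist (prepend p w) (p.length + m) := by
    rw [← hist_take (prepend p w) m (p.length + m) (by omega)]
    exact List.take_prefix _ _
  calc cyl (p ++ hist w m) = cyl (hist (prepend p w) (p.length + m)) := by
        rw [hist_prepend]
    _ ⊆ cyl (hist (prepend p w) m) := cyl_anti h1
    _ ⊆ V := hm

/-- histories that are not at or past an entry position -/
def NonPast (p : List Z) (V : Set (Play Z)) : Set (List Z) :=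
  {h | ¬ ∃ r ∈ BarAt p V, r <+: h}

lemma nonPast_anti {p : List Z} {V : Set (Play Z)} {h h' : List Z}
    (hle : h' <+: h) (hh : h ∈ NonPast p V) : h' ∈ NonPast p V := by
  rintro ⟨r, hr, hrle⟩
  exact hh ⟨r, hr, hrle.trans hle⟩

lemma bar_take_nonPast {p : List Z} {V : Set (Play Z)} {r : List Z}
    (hr : r ∈ BarAt p V) {i : ℕ} (hi : i < r.length) : r.take i ∈ NonPast p V := by
  rintro ⟨r', hr', hrle⟩
  have h1 : r' <+: r := hrle.trans (List.take_prefix i r)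
  have h2 : r' = r := barAt_antichain hr' hr h1
  subst h2
  have := hrle.length_le
  rw [List.length_take] at this
  omega

lemma nonPast_or_past (p : List Z) (V : Set (Play Z)) (q : List Z) :
    q ∈ NonPast p V ∨ ∃ r ∈ BarAt p V, r <+: q := by
  by_cases h : q ∈ NonPast p V
  · exact Or.inl h
  · right; simpa [NonPast] using h

lemma cyl_inter_hitAt {p : List Z} {V : Set (Play Z)} {q : List Z} (hq : q ∈ NonPast p V) :
    cyl q ∩ HitAt p V = ⋃ r ∈ {r ∈ BarAt p V | q <+: r}, cyl r := by
  ext w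
  simp only [Set.mem_inter_iff, HitAt, Set.mem_iUnion, Set.mem_setOf_eq]
  constructor
  · rintro ⟨hwq, r, hr, hwr⟩
    refine ⟨r, ⟨hr, ?_⟩, hwr⟩
    rcases prefix_or_prefix_of_mem_cyl hwq hwr with h | h
    · exact h
    · exact absurd ⟨r, hr, h⟩ hq
  · rintro ⟨r, ⟨hr, hqr⟩, hwr⟩
    exact ⟨cyl_anti hqr hwr, r, hr, hwr⟩

/-- membership in the relevant cylinder can be tested through `prepend` -/
lemma prepend_mem_iff_of_bar {p r : List Z} {w : Play Z} :
    prepend p w ∈ cyl (p ++ r) ↔ w ∈ cyl r := prepend_mem_cyl_append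

/-! ### iterated phases -/

/-- positions reachable as successive minimal entries into the sets `V 0, V 1, ...` -/
def Reach (V : ℕ → Set (Play Z)) : ℕ → Set (List Z)
  | 0 => {[]}
  | (k+1) => {q' | ∃ q ∈ Reach V k, ∃ r ∈ BarAt q (V k), q' = q ++ r}

/-- determinism: two reachable positions at the same phase lying on a common history agree -/
lemma reach_unique {V : ℕ → Set (Play Z)} : ∀ {k : ℕ} {q q' l : List Z},
    q ∈ Reach V k → q' ∈ Reach V k → q <+: l → q' <+: l → q = q' := by
  intro k
  induction k with
  | zero => intro q q' l hq hq' _ _; rw [Set.mem_singleton_iff.1 hq, Set.mem_singleton_iff.1 hq']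
  | succ k ih =>
    rintro q q' l ⟨a, ha, r, hr, rfl⟩ ⟨a', ha', r', hr', rfl⟩ hl hl'
    have haa : a = a' := ih ha ha' ((List.prefix_append a r).trans hl)
      ((List.prefix_append a' r').trans hl')
    subst haa
    rcases List.prefix_or_prefix_of_prefix hl hl' with h1 | h1
    · rw [barAt_antichain hr hr' ((List.prefix_append_right_inj a).1 h1)]
    · rw [barAt_antichain hr' hr ((List.prefix_append_right_inj a).1 h1)]

lemma reach_descend {V : ℕ → Set (Play Z)} : ∀ {k' : ℕ} {q' : List Z},
    q' ∈ Reach V k' → ∀ k < k', ∃ a ∈ Reach V k, ∃ r ∈ BarAt a (V k), a ++ r <+: q' := by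
  intro k'
  induction k' with
  | zero => intro q' _ k hk; omega
  | succ k' ih =>
    rintro q' ⟨a, ha, r, hr, rfl⟩ k hk
    rcases Nat.lt_succ_iff_lt_or_eq.1 hk with h1 | h1
    · obtain ⟨b, hb, s, hs, hpre⟩ := ih ha k h1
      exact ⟨b, hb, s, hs, hpre.trans (List.prefix_append a r)⟩
    · subst h1
      exact ⟨a, ha, r, hr, List.prefix_rfl⟩

/-- the phase-`k` region -/
def FS (V : ℕ → Set (Play Z)) (k : ℕ) : Set (Play Z) := ⋃ q ∈ Reach V k, cyl q

@[simp] lemma FS_zero (V : ℕ → Set (Play Z)) : FS V 0 = Set.univ := by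
  ext w; simp [FS, Reach]

lemma measurableSet_FS (V : ℕ → Set (Play Z)) (k : ℕ) : MeasurableSet (FS V k) :=
  MeasurableSet.biUnion (Set.to_countable _) (fun q _ => measurableSet_cyl q)

lemma FS_antitone (V : ℕ → Set (Play Z)) (k : ℕ) : FS V (k+1) ⊆ FS V k := by
  rintro w hw
  simp only [FS, Set.mem_iUnion] at hw ⊢
  obtain ⟨q', ⟨a, ha, r, hr, rfl⟩, hwq⟩ := hw
  exact ⟨a, ha, cyl_anti (List.prefix_append a r) hwq⟩

lemma FS_succ_subset (V : ℕ → Set (Play Z)) (k : ℕ) : FS V (k+1) ⊆ V k := by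
  rintro w hw
  simp only [FS, Set.mem_iUnion] at hw
  obtain ⟨q', ⟨a, ha, r, hr, rfl⟩, hwq⟩ := hw
  exact hr.1 hwq

lemma prefix_hist_of_mem_cyl {w : Play Z} {p : List Z} {n : ℕ} (hw : w ∈ cyl p)
    (hn : p.length ≤ n) : p <+: hist w n := by
  apply List.prefix_iff_eq_take.2
  rw [hist_take w p.length n hn]
  exact ((mem_cyl_iff_hist w p).1 hw).symm

lemma reach_base_unique {V : ℕ → Set (Play Z)} {k : ℕ} {q q' : List Z} {w : Play Z}
    (hq : q ∈ Reach V k) (hq' : q' ∈ Reach V k) (hw : w ∈ cyl q) (hw' : w ∈ cyl q') :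
    q = q' :=
  reach_unique hq hq' (prefix_hist_of_mem_cyl hw (le_max_left _ _))
    (prefix_hist_of_mem_cyl (n := max q.length q'.length) hw' (le_max_right _ _))

lemma reach_cyl_disjoint {V : ℕ → Set (Play Z)} {k : ℕ} {q q' : List Z}
    (hq : q ∈ Reach V k) (hq' : q' ∈ Reach V k) (hne : q ≠ q') : cyl q ∩ cyl q' = ∅ := by
  apply Set.eq_empty_of_forall_notMem
  rintro w ⟨hw1, hw2⟩
  exact hne (reach_base_unique hq hq' hw1 hw2)

/-- the phase base position of a play -/
def baseAt (V : ℕ → Set (Play Z)) (k : ℕ) (w : Play Z) : List Z :=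
  if h : ∃ q ∈ Reach V k, w ∈ cyl q then h.choose else []

lemma baseAt_eq {V : ℕ → Set (Play Z)} {k : ℕ} {q : List Z} {w : Play Z}
    (hq : q ∈ Reach V k) (hw : w ∈ cyl q) : baseAt V k w = q := by
  have hex : ∃ q' ∈ Reach V k, w ∈ cyl q' := ⟨q, hq, hw⟩
  rw [baseAt, dif_pos hex]
  have hcs := hex.choose_spec
  by_contra hne
  have := reach_cyl_disjoint hcs.1 hq hne
  exact absurd (Set.eq_empty_iff_forall_notMem.1 this w ⟨hcs.2, hw⟩) (fun h => h)

lemma mem_FS_iff {V : ℕ → Set (Play Z)} {k : ℕ} {w : Play Z} :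
    w ∈ FS V k ↔ ∃ q ∈ Reach V k, w ∈ cyl q := by
  simp [FS]

/-- the phase payoff function -/
def PhiF (φf : List Z → ℝ) (f : Play Z → ℝ) (V : ℕ → Set (Play Z)) (k : ℕ) : Play Z → ℝ :=
  (FS V k).piecewise (fun w => φf (baseAt V k w)) f

lemma PhiF_on_cyl {φf : List Z → ℝ} {f : Play Z → ℝ} {V : ℕ → Set (Play Z)} {k : ℕ}
    {q : List Z} {w : Play Z} (hq : q ∈ Reach V k) (hw : w ∈ cyl q) :
    PhiF φf f V k w = φf q := by
  rw [PhiF, Set.piecewise_eq_of_mem _ _ _ (mem_FS_iff.2 ⟨q, hq, hw⟩), baseAt_eq hq hw]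

lemma PhiF_off {φf : List Z → ℝ} {f : Play Z → ℝ} {V : ℕ → Set (Play Z)} {k : ℕ}
    {w : Play Z} (hw : w ∉ FS V k) : PhiF φf f V k w = f w :=
  Set.piecewise_eq_of_notMem _ _ _ hw

lemma measurable_PhiF {φf : List Z → ℝ} {f : Play Z → ℝ} (hf : Measurable f)
    (V : ℕ → Set (Play Z)) (k : ℕ) : Measurable (PhiF φf f V k) := by
  apply Measurable.piecewise (measurableSet_FS V k) _ hf
  intro B hB
  have : (fun w => φf (baseAt V k w)) ⁻¹' B =
      (⋃ q ∈ {q | q ∈ Reach V k ∧ φf q ∈ B}, cyl q) ∪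
        (if φf [] ∈ B then (FS V k)ᶜ else ∅) := by
    ext w
    simp only [Set.mem_preimage, Set.mem_union, Set.mem_iUnion, Set.mem_setOf_eq]
    by_cases hw : w ∈ FS V k
    · obtain ⟨q, hq, hwq⟩ := mem_FS_iff.1 hw
      rw [baseAt_eq hq hwq]
      constructor
      · intro hB'
        exact Or.inl ⟨q, ⟨hq, hB'⟩, hwq⟩
      · rintro (⟨q', ⟨hq', hB'⟩, hwq'⟩ | hoff)
        · rwa [reach_base_unique hq hq' hwq hwq']
        · split at hoff
          · exact absurd hw hoff
          · exact absurd hoff (Set.notMem_empty w)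
    · have hbase : baseAt V k w = [] := by
        rw [baseAt, dif_neg]
        rintro ⟨q, hq, hwq⟩
        exact hw (mem_FS_iff.2 ⟨q, hq, hwq⟩)
      rw [hbase]
      constructor
      · intro hB'
        right; rw [if_pos hB']; exact hw
      · rintro (⟨q', ⟨hq', hB'⟩, hwq'⟩ | hoff)
        · exact absurd (mem_FS_iff.2 ⟨q', hq', hwq'⟩) hw
        · split at hoff
          · assumption
          · exact absurd hoff (Set.notMem_empty w)
  rw [this]
  refine MeasurableSet.union (MeasurableSet.biUnion (Set.to_countable _)
    (fun q _ => measurableSet_cyl q)) ?_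
  split
  · exact (measurableSet_FS V k).compl
  · exact MeasurableSet.empty

lemma prepend_preimage_FS {V : ℕ → Set (Play Z)} {k : ℕ} {q : List Z}
    (hq : q ∈ Reach V k) : prepend q ⁻¹' (FS V (k+1)) = HitAt q (V k) := by
  ext w
  simp only [Set.mem_preimage]
  constructor
  · intro hw
    obtain ⟨q'', ⟨a, ha, r, hr, rfl⟩, hx⟩ := mem_FS_iff.1 hw
    have haq : a = q := reach_base_unique ha hq (cyl_anti (List.prefix_append a r) hx)
      (prepend_mem_cyl q w)
    subst haq
    exact Set.mem_biUnion hr (prepend_mem_cyl_append.1 hx)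
  · intro hw
    simp only [HitAt, Set.mem_iUnion] at hw
    obtain ⟨r, hr, hwr⟩ := hw
    exact mem_FS_iff.2 ⟨q ++ r, ⟨q, hq, r, hr, rfl⟩, prepend_mem_cyl_append.2 hwr⟩

lemma FS_eq_iUnion (V : ℕ → Set (Play Z)) (k : ℕ) :
    FS V k = ⋃ q : ↥(Reach V k), cyl q.1 := by
  simp [FS, Set.iUnion_coe_set]

lemma PhiF_mem_Icc {φf : List Z → ℝ} {f : Play Z → ℝ} {V : ℕ → Set (Play Z)} {k : ℕ}
    (hφ : ∀ q, φf q ∈ Set.Icc (0:ℝ) 1) (hf : ∀ w, f w ∈ Set.Icc (0:ℝ) 1) (w : Play Z) :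
    PhiF φf f V k w ∈ Set.Icc (0:ℝ) 1 := by
  by_cases hw : w ∈ FS V k
  · rw [PhiF, Set.piecewise_eq_of_mem _ _ _ hw]; exact hφ _
  · rw [PhiF_off hw]; exact hf w

end Top2

/-! ### cylProb and conditioning -/

section Game

variable {X Y : Type} [Fintype X] [Nonempty X] [Fintype Y] [Nonempty Y]
  [MeasurableSpace X] [MeasurableSpace Y]
  [MeasurableSingletonClass X] [MeasurableSingletonClass Y]
  [TopologicalSpace X] [DiscreteTopology X] [TopologicalSpace Y] [DiscreteTopology Y]

instance {M : Type} [Nonempty M] : Nonempty (PMF M) :=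
  ⟨PMF.pure (Classical.arbitrary M)⟩

instance {Z M : Type} [Nonempty M] : Nonempty (Strategy Z M) :=
  ⟨fun _ => Classical.arbitrary _⟩

/-- conditional (shifted) strategy -/
def after {Z M : Type} (p : List Z) (s : List Z → PMF M) : List Z → PMF M :=
  fun h => s (p ++ h)

@[simp] lemma after_nil {Z M : Type} (s : List Z → PMF M) : after [] s = s := rfl

@[simp] lemma after_apply {Z M : Type} (p h : List Z) (s : List Z → PMF M) :
    after p s h = s (p ++ h) := rfl

variable (σ : Strategy (X × Y) X) (τ : Strategy (X × Y) Y)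

@[simp] lemma cylProb_nil : cylProb σ τ [] = 1 := by
  simp [cylProb]

lemma cylProb_eq_range (p : List (X × Y)) (d : X × Y) :
    cylProb σ τ p = ∏ i ∈ Finset.range p.length,
      σ (p.take i) (p.getD i d).1 * τ (p.take i) (p.getD i d).2 := by
  rw [← Fin.prod_univ_eq_prod_range
    (fun i => σ (p.take i) (p.getD i d).1 * τ (p.take i) (p.getD i d).2) p.length]
  apply Finset.prod_congr rfl
  intro i _
  simp [List.get_eq_getElem, List.getD_eq_getElem?_getD, List.getElem?_eq_getElem i.2]

lemma cylProb_concat (p : List (X × Y)) (z : X × Y) :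
    cylProb σ τ (p ++ [z]) = cylProb σ τ p * (σ p z.1 * τ p z.2) := by
  rw [cylProb_eq_range σ τ (p ++ [z]) z, cylProb_eq_range σ τ p z]
  have hl : (p ++ [z]).length = p.length + 1 := by simp
  rw [hl, Finset.prod_range_succ]
  congr 1
  · apply Finset.prod_congr rfl
    intro i hi
    rw [Finset.mem_range] at hi
    rw [List.take_append_of_le_length (le_of_lt hi)]
    have : (p ++ [z]).getD i z = p.getD i z := by
      simp [List.getD_eq_getElem?_getD, List.getElem?_eq_getElem (by simp; omega : i < (p ++ [z]).length),
        List.getElem?_eq_getElem hi, List.getElem_append_left hi]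
    rw [this]
  · rw [List.take_left]
    have : (p ++ [z]).getD p.length z = z := by
      simp [List.getD_eq_getElem?_getD,
        List.getElem?_eq_getElem (by simp : p.length < (p ++ [z]).length),
        List.getElem_append_right (le_refl p.length)]
    rw [this]

lemma cylProb_append (p q : List (X × Y)) :
    cylProb σ τ (p ++ q) = cylProb σ τ p * cylProb (after p σ) (after p τ) q := by
  induction q using List.reverseRecOn with
  | nil => simp
  | append_singleton q z ih =>
    rw [← List.append_assoc, cylProb_concat, ih, cylProb_concat]
    simp [mul_assoc]

lemma cylProb_le_one (p : List (X × Y)) : cylProb σ τ p ≤ 1 := by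
  apply Finset.prod_le_one (fun _ _ => zero_le)
  intro i _
  calc σ (p.take i.1) (p.get i).1 * τ (p.take i.1) (p.get i).2
      ≤ 1 * 1 := mul_le_mul' (PMF.coe_le_one _ _) (PMF.coe_le_one _ _)
    _ = 1 := one_mul 1

lemma cylProb_ne_top (p : List (X × Y)) : cylProb σ τ p ≠ ⊤ :=
  ne_top_of_le_ne_top ENNReal.one_ne_top (cylProb_le_one σ τ p)

lemma cylProb_congr {σ' : Strategy (X × Y) X} {τ' : Strategy (X × Y) Y} {p : List (X × Y)}
    (h : ∀ i < p.length, σ (p.take i) = σ' (p.take i) ∧ τ (p.take i) = τ' (p.take i)) :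
    cylProb σ τ p = cylProb σ' τ' p := by
  unfold cylProb
  apply Finset.prod_congr rfl
  intro i _
  rw [(h i.1 i.2).1, (h i.1 i.2).2]

variable (μ : Strategy (X × Y) X → Strategy (X × Y) Y → Measure (Play (X × Y)))
  (hμ : ∀ σ τ, IsInduced σ τ (μ σ τ))

include hμ

/-- The fundamental conditioning identity, measure form. -/
lemma restrict_cyl_eq (p : List (X × Y)) :
    (μ σ τ).restrict (cyl p) =
      cylProb σ τ p • Measure.map (prepend p) (μ (after p σ) (after p τ)) := by
  haveI h1 : IsProbabilityMeasure (μ σ τ) := (hμ σ τ).1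
  haveI h2 : IsProbabilityMeasure (μ (after p σ) (after p τ)) := (hμ _ _).1
  haveI h3 : IsProbabilityMeasure (Measure.map (prepend p) (μ (after p σ) (after p τ))) :=
    Measure.isProbabilityMeasure_map (measurable_prepend p).aemeasurable
  haveI h4 : IsFiniteMeasure
      (cylProb σ τ p • Measure.map (prepend p) (μ (after p σ) (after p τ))) := by
    constructor
    rw [Measure.smul_apply, smul_eq_mul, measure_univ, mul_one]
    exact lt_of_le_of_lt (cylProb_le_one σ τ p) (by norm_num)
  apply measure_ext_cyl
  intro q
  rw [Measure.restrict_apply (measurableSet_cyl q), Measure.smul_apply, smul_eq_mul,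
    Measure.map_apply (measurable_prepend p) (measurableSet_cyl q)]
  by_cases h5 : p <+: q
  · obtain ⟨q', rfl⟩ := h5
    have e1 : cyl (p ++ q') ∩ cyl p = cyl (p ++ q') :=
      Set.inter_eq_self_of_subset_left (cyl_anti ⟨q', rfl⟩)
    have e2 : prepend p ⁻¹' cyl (p ++ q') = cyl q' := by
      ext w; exact prepend_mem_cyl_append
    rw [e1, e2, (hμ σ τ).2, (hμ _ _).2, cylProb_append]
  · by_cases h6 : q <+: p
    · have e1 : cyl q ∩ cyl p = cyl p :=
        Set.inter_eq_self_of_subset_right (cyl_anti h6)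
      have e2 : prepend p ⁻¹' cyl q = Set.univ := by
        ext w
        simp only [Set.mem_preimage, Set.mem_univ, iff_true]
        exact cyl_anti h6 (prepend_mem_cyl p w)
      rw [e1, e2, (hμ σ τ).2, measure_univ, mul_one]
    · have e1 : cyl q ∩ cyl p = ∅ := cyl_disjoint h6 h5
      have e2 : prepend p ⁻¹' cyl q = ∅ := by
        ext w
        simp only [Set.mem_preimage, Set.mem_empty_iff_false, iff_false]
        intro hw
        have : prepend p w ∈ cyl q ∩ cyl p := ⟨hw, prepend_mem_cyl p w⟩
        rw [e1] at this
        exact this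
      rw [e1, e2]
      simp

omit hμ in
lemma integrable_of_bounds {α : Type*} [MeasurableSpace α] {m : Measure α} [IsFiniteMeasure m]
    {g : α → ℝ} (hg : Measurable g) (hb : ∀ w, g w ∈ Set.Icc (0:ℝ) 1) : Integrable g m := by
  apply Integrable.mono' (integrable_const (1:ℝ)) hg.aestronglyMeasurable
  filter_upwards with w
  rw [Real.norm_eq_abs, abs_le]
  exact ⟨by linarith [(hb w).1], (hb w).2⟩

/-- The fundamental conditioning identity, integral form. -/
lemma setIntegral_cyl {g : Play (X × Y) → ℝ} (hg : Measurable g)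
    (hb : ∀ w, g w ∈ Set.Icc (0:ℝ) 1) (p : List (X × Y)) :
    ∫ w in cyl p, g w ∂ (μ σ τ) =
      (cylProb σ τ p).toReal * ∫ w, g (prepend p w) ∂ (μ (after p σ) (after p τ)) := by
  rw [restrict_cyl_eq σ τ μ hμ p, integral_smul_measure,
    integral_map (measurable_prepend p).aemeasurable hg.aestronglyMeasurable]
  rfl

/-! ### invariance of pre-entry quantities under strategy modification past entry -/

omit hμ in
lemma cylProb_eq_of_nonPast {p : List (X × Y)} {V : Set (Play (X × Y))}
    {σ' : Strategy (X × Y) X} {τ' : Strategy (X × Y) Y}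
    (hag : ∀ h ∈ NonPast p V, σ h = σ' h ∧ τ h = τ' h)
    {q : List (X × Y)} (hq : ∀ i < q.length, q.take i ∈ NonPast p V) :
    cylProb σ τ q = cylProb σ' τ' q :=
  cylProb_congr σ τ (fun i hi => hag _ (hq i hi))

lemma measure_cyl_eq_of_nonPast {p : List (X × Y)} {V : Set (Play (X × Y))}
    {σ' : Strategy (X × Y) X} {τ' : Strategy (X × Y) Y}
    (hag : ∀ h ∈ NonPast p V, σ h = σ' h ∧ τ h = τ' h)
    {q : List (X × Y)} (hq : ∀ i < q.length, q.take i ∈ NonPast p V) :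
    μ σ τ (cyl q) = μ σ' τ' (cyl q) := by
  rw [(hμ σ τ).2, (hμ σ' τ').2, cylProb_eq_of_nonPast σ τ hag hq]

lemma measure_cyl_bar_eq {p : List (X × Y)} {V : Set (Play (X × Y))}
    {σ' : Strategy (X × Y) X} {τ' : Strategy (X × Y) Y}
    (hag : ∀ h ∈ NonPast p V, σ h = σ' h ∧ τ h = τ' h)
    {r : List (X × Y)} (hr : r ∈ BarAt p V) :
    μ σ τ (cyl r) = μ σ' τ' (cyl r) :=
  measure_cyl_eq_of_nonPast σ τ μ hμ hag (fun i hi => bar_take_nonPast hr hi)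

lemma measure_cyl_nonPast_eq {p : List (X × Y)} {V : Set (Play (X × Y))}
    {σ' : Strategy (X × Y) X} {τ' : Strategy (X × Y) Y}
    (hag : ∀ h ∈ NonPast p V, σ h = σ' h ∧ τ h = τ' h)
    {q : List (X × Y)} (hq : q ∈ NonPast p V) :
    μ σ τ (cyl q) = μ σ' τ' (cyl q) :=
  measure_cyl_eq_of_nonPast σ τ μ hμ hag
    (fun i _ => nonPast_anti (List.take_prefix i q) hq)

lemma restrict_missAt_eq {p : List (X × Y)} {V : Set (Play (X × Y))}
    {σ' : Strategy (X × Y) X} {τ' : Strategy (X × Y) Y}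
    (hag : ∀ h ∈ NonPast p V, σ h = σ' h ∧ τ h = τ' h) :
    (μ σ τ).restrict (MissAt p V) = (μ σ' τ').restrict (MissAt p V) := by
  haveI h1 : IsProbabilityMeasure (μ σ τ) := (hμ σ τ).1
  haveI h2 : IsProbabilityMeasure (μ σ' τ') := (hμ σ' τ').1
  have key : ∀ q : List (X × Y), μ σ τ (cyl q ∩ MissAt p V) = μ σ' τ' (cyl q ∩ MissAt p V) := by
    intro q
    rcases nonPast_or_past p V q with hq | ⟨r, hr, hrq⟩
    · -- compute via subtraction
      have hsub : cyl q ∩ HitAt p V ⊆ cyl q := Set.inter_subset_left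
      have hmeas : MeasurableSet (cyl q ∩ HitAt p V) :=
        (measurableSet_cyl q).inter (measurableSet_hitAt p V)
      have hdiff : cyl q ∩ MissAt p V = cyl q \ (cyl q ∩ HitAt p V) := by
        ext w
        simp only [MissAt, Set.mem_inter_iff, Set.mem_compl_iff, Set.mem_diff, not_and]
        tauto
      have hcompute : ∀ (ν : Measure (Play (X × Y))), IsProbabilityMeasure ν →
          (∀ q' : List (X × Y), ν (cyl q') = cylProb σ τ q' ∨ True) → True := fun _ _ _ => trivial
      have hbiu : ∀ (ν : Measure (Play (X × Y))),
          ν (cyl q ∩ HitAt p V) = ∑' r : ↥{r ∈ BarAt p V | q <+: r}, ν (cyl r.1) := by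
        intro ν
        rw [cyl_inter_hitAt hq]
        apply measure_biUnion (Set.to_countable _)
        · intro a ha b hb hne
          rw [Function.onFun, Set.disjoint_iff_inter_eq_empty]
          exact barAt_pairwise_disjoint ha.1 hb.1 hne
        · exact fun r _ => measurableSet_cyl r
      rw [hdiff, measure_diff hsub hmeas.nullMeasurableSet (measure_ne_top _ _),
        measure_diff hsub hmeas.nullMeasurableSet (measure_ne_top _ _),
        hbiu, hbiu, measure_cyl_nonPast_eq σ τ μ hμ hag hq]
      congr 1
      apply tsum_congr
      intro r
      exact measure_cyl_bar_eq σ τ μ hμ hag r.2.1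
    · have hempty : cyl q ∩ MissAt p V = ∅ := by
        apply Set.eq_empty_of_forall_notMem
        rintro w ⟨hwq, hwm⟩
        exact hwm (Set.mem_biUnion hr (cyl_anti hrq hwq))
      rw [hempty]
      simp
  ext s hs
  rw [Measure.restrict_apply hs, Measure.restrict_apply hs]
  -- use π-system uniqueness on the restricted measures
  have : (μ σ τ).restrict (MissAt p V) = (μ σ' τ').restrict (MissAt p V) := by
    apply measure_ext_cyl
    intro q
    rw [Measure.restrict_apply (measurableSet_cyl q), Measure.restrict_apply (measurableSet_cyl q)]
    exact key q
  rw [← Measure.restrict_apply hs, ← Measure.restrict_apply hs, this]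

/-! ### decomposition of an integral over entry positions -/

omit hμ in
lemma hitAt_eq_iUnion (p : List (X × Y)) (V : Set (Play (X × Y))) :
    HitAt p V = ⋃ r : ↥(BarAt p V), cyl r.1 := by
  simp [HitAt, Set.iUnion_coe_set]

lemma decomp {g : Play (X × Y) → ℝ} (hg : Measurable g) (hb : ∀ w, g w ∈ Set.Icc (0:ℝ) 1)
    (p : List (X × Y)) (V : Set (Play (X × Y))) :
    ∫ w, g (prepend p w) ∂ μ σ τ
      = (∑' r : ↥(BarAt p V), (μ σ τ (cyl r.1)).toReal *
          ∫ w, g (prepend (p ++ r.1) w) ∂ μ (after r.1 σ) (after r.1 τ))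
        + ∫ w in MissAt p V, g (prepend p w) ∂ μ σ τ := by
  haveI h1 : IsProbabilityMeasure (μ σ τ) := (hμ σ τ).1
  have hgm : Measurable (fun w => g (prepend p w)) := hg.comp (measurable_prepend p)
  have hgb : ∀ w, g (prepend p w) ∈ Set.Icc (0:ℝ) 1 := fun w => hb _
  have hint : Integrable (fun w => g (prepend p w)) (μ σ τ) := integrable_of_bounds hgm hgb
  rw [← integral_add_compl (measurableSet_hitAt p V) hint]
  congr 1
  rw [hitAt_eq_iUnion]
  rw [integral_iUnion (s := fun r : ↥(BarAt p V) => cyl r.1)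
    (fun r => measurableSet_cyl r.1) ?hd hint.integrableOn]
  case hd =>
    intro a b hne
    rw [Function.onFun, Set.disjoint_iff_inter_eq_empty]
    exact barAt_pairwise_disjoint a.2 b.2 (fun h => hne (Subtype.ext h))
  apply tsum_congr
  intro r
  rw [setIntegral_cyl σ τ μ hμ hgm hgb r.1, (hμ σ τ).2]
  congr 1
  apply integral_congr_ae
  filter_upwards with w
  rw [prepend_prepend]

/-! ### values -/

variable (f : Play (X × Y) → ℝ) (D : Set (Play (X × Y)))

/-- lower value of the game from position `p` with payoff `g` -/
def lvalAt (p : List (X × Y)) (g : Play (X × Y) → ℝ) : ℝ :=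
  ⨆ σ' : Strategy (X × Y) X, ⨅ τ' : Strategy (X × Y) Y, ∫ w, g (prepend p w) ∂ μ σ' τ'

/-- infimum of lower values over open supersets of `D` -/
def phi (p : List (X × Y)) : ℝ :=
  ⨅ O : {O : Set (Play (X × Y)) // IsOpen O ∧ D ⊆ O}, lvalAt μ p (payoff f O.1)

omit hμ in
lemma integral_mem_Icc {α : Type*} [MeasurableSpace α] (m : Measure α) [IsProbabilityMeasure m]
    {g : α → ℝ} (hg : Measurable g) (hb : ∀ w, g w ∈ Set.Icc (0:ℝ) 1) :
    ∫ w, g w ∂ m ∈ Set.Icc (0:ℝ) 1 := by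
  constructor
  · exact integral_nonneg (fun w => (hb w).1)
  · calc ∫ w, g w ∂ m ≤ ∫ _, (1:ℝ) ∂ m :=
          integral_mono (integrable_of_bounds hg hb) (integrable_const 1) (fun w => (hb w).2)
    _ = 1 := by simp

variable {g : Play (X × Y) → ℝ}

lemma integral_prepend_mem_Icc (hg : Measurable g) (hb : ∀ w, g w ∈ Set.Icc (0:ℝ) 1)
    (p : List (X × Y)) (σ' : Strategy (X × Y) X) (τ' : Strategy (X × Y) Y) :
    ∫ w, g (prepend p w) ∂ μ σ' τ' ∈ Set.Icc (0:ℝ) 1 := by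
  haveI := (hμ σ' τ').1
  exact integral_mem_Icc _ (hg.comp (measurable_prepend p)) (fun w => hb _)

lemma iInf_integral_mem_Icc (hg : Measurable g) (hb : ∀ w, g w ∈ Set.Icc (0:ℝ) 1)
    (p : List (X × Y)) (σ' : Strategy (X × Y) X) :
    (⨅ τ' : Strategy (X × Y) Y, ∫ w, g (prepend p w) ∂ μ σ' τ') ∈ Set.Icc (0:ℝ) 1 := by
  constructor
  · exact le_ciInf (fun τ' => (integral_prepend_mem_Icc μ hμ hg hb p σ' τ').1)
  · refine le_trans (ciInf_le ⟨0, ?_⟩ (Classical.arbitrary _)) ?_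
    · rintro x ⟨τ', rfl⟩
      exact (integral_prepend_mem_Icc μ hμ hg hb p σ' τ').1
    · exact (integral_prepend_mem_Icc μ hμ hg hb p _ _).2

lemma bddBelow_iInf_integral (hg : Measurable g) (hb : ∀ w, g w ∈ Set.Icc (0:ℝ) 1)
    (p : List (X × Y)) (σ' : Strategy (X × Y) X) :
    BddBelow (Set.range (fun τ' : Strategy (X × Y) Y => ∫ w, g (prepend p w) ∂ μ σ' τ')) := by
  refine ⟨0, ?_⟩
  rintro x ⟨τ', rfl⟩
  exact (integral_prepend_mem_Icc μ hμ hg hb p σ' τ').1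

lemma lvalAt_mem_Icc (hg : Measurable g) (hb : ∀ w, g w ∈ Set.Icc (0:ℝ) 1)
    (p : List (X × Y)) : lvalAt μ p g ∈ Set.Icc (0:ℝ) 1 := by
  unfold lvalAt
  constructor
  · refine le_trans (iInf_integral_mem_Icc μ hμ hg hb p (Classical.arbitrary _)).1
      (le_ciSup (f := fun σ' : Strategy (X × Y) X =>
        ⨅ τ' : Strategy (X × Y) Y, ∫ w, g (prepend p w) ∂ μ σ' τ') ⟨1, ?_⟩ (Classical.arbitrary _))
    rintro x ⟨σ', rfl⟩
    exact (iInf_integral_mem_Icc μ hμ hg hb p σ').2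
  · exact ciSup_le (fun σ' => (iInf_integral_mem_Icc μ hμ hg hb p σ').2)

variable (hfm : Measurable f) (hfb : ∀ w, f w ∈ Set.Icc (0:ℝ) 1)

include hfm hfb

lemma lval_payoff_mem_Icc (p : List (X × Y))
    (O : {O : Set (Play (X × Y)) // IsOpen O ∧ D ⊆ O}) :
    lvalAt μ p (payoff f O.1) ∈ Set.Icc (0:ℝ) 1 :=
  lvalAt_mem_Icc μ hμ (measurable_payoff hfm (isOpen_measurableSet O.2.1))
    (payoff_mem_Icc hfb O.1) p

lemma phi_mem_Icc (p : List (X × Y)) : phi μ f D p ∈ Set.Icc (0:ℝ) 1 := by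
  haveI hne : Nonempty {O : Set (Play (X × Y)) // IsOpen O ∧ D ⊆ O} :=
    ⟨⟨Set.univ, isOpen_univ, Set.subset_univ D⟩⟩
  constructor
  · exact le_ciInf (fun O => (lval_payoff_mem_Icc μ hμ f D hfm hfb p O).1)
  · refine le_trans (ciInf_le ⟨0, ?_⟩ (Classical.arbitrary _)) ?_
    · rintro x ⟨O, rfl⟩
      exact (lval_payoff_mem_Icc μ hμ f D hfm hfb p O).1
    · exact (lval_payoff_mem_Icc μ hμ f D hfm hfb p _).2

lemma phi_le_lvalAt (p : List (X × Y)) (O : {O : Set (Play (X × Y)) // IsOpen O ∧ D ⊆ O}) :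
    phi μ f D p ≤ lvalAt μ p (payoff f O.1) := by
  refine ciInf_le ⟨0, ?_⟩ O
  rintro x ⟨O', rfl⟩
  exact (lval_payoff_mem_Icc μ hμ f D hfm hfb p O').1

/-! ### the key step lemma -/

lemma step_exists (p : List (X × Y)) {V : Set (Play (X × Y))} (hV : IsOpen V) (hDV : D ⊆ V)
    {ε : ℝ} (hε : 0 < ε) :
    ∃ σs : Strategy (X × Y) X, ∀ τs : Strategy (X × Y) Y,
      phi μ f D p - ε ≤
        (∑' r : ↥(BarAt p V), (μ σs τs (cyl r.1)).toReal * phi μ f D (p ++ r.1))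
          + ∫ w in MissAt p V, f (prepend p w) ∂ μ σs τs := by
  haveI hne : Nonempty {O : Set (Play (X × Y)) // IsOpen O ∧ D ⊆ O} :=
    ⟨⟨Set.univ, isOpen_univ, Set.subset_univ D⟩⟩
  -- choose near-optimal open supersets at every position
  have hOq' : ∀ q : List (X × Y), ∃ O : {O : Set (Play (X × Y)) // IsOpen O ∧ D ⊆ O},
      lvalAt μ q (payoff f O.1) < phi μ f D q + ε/4 := by
    intro q
    exact exists_lt_of_ciInf_lt (show phi μ f D q < phi μ f D q + ε/4 by linarith)
  choose Oq hOq using hOq'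
  -- the diagonal open superset
  set Ostar : Set (Play (X × Y)) :=
    (⋃ r ∈ BarAt p V, (cyl (p ++ r) ∩ (Oq (p ++ r)).1)) ∪ (cyl p)ᶜ with hOstarDef
  have hOopen : IsOpen Ostar := by
    apply IsOpen.union
    · exact isOpen_biUnion (fun r _ => (isOpen_cyl _).inter (Oq (p ++ r)).2.1)
    · exact (isClosed_cyl p).isOpen_compl
  have hDO : D ⊆ Ostar := by
    intro w hw
    by_cases hwp : w ∈ cyl p
    · have h1 : prepend p (dropPlay p w) = w := prepend_dropPlay hwp
      have h2 : dropPlay p w ∈ HitAt p V := mem_hitAt_of_open hV (by rw [h1]; exact hDV hw)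
      simp only [HitAt, Set.mem_iUnion] at h2
      obtain ⟨r, hr, hwr⟩ := h2
      have h3 : w ∈ cyl (p ++ r) := by
        rw [← h1]; exact prepend_mem_cyl_append.2 hwr
      exact Or.inl (Set.mem_biUnion hr ⟨h3, (Oq (p ++ r)).2.2 hw⟩)
    · exact Or.inr hwp
  have hOsm : Measurable (payoff f Ostar) := measurable_payoff hfm (isOpen_measurableSet hOopen)
  have hOsb : ∀ w, payoff f Ostar w ∈ Set.Icc (0:ℝ) 1 := payoff_mem_Icc hfb Ostar
  -- select a near-optimal strategy for the Ostar-game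
  have hlt : phi μ f D p - ε/4 < lvalAt μ p (payoff f Ostar) :=
    lt_of_lt_of_le (by linarith)
      (phi_le_lvalAt μ hμ f D hfm hfb p ⟨Ostar, hOopen, hDO⟩)
  obtain ⟨σs, hσs⟩ := exists_lt_of_lt_ciSup (show phi μ f D p - ε/4 <
    ⨆ σ' : Strategy (X × Y) X, ⨅ τ' : Strategy (X × Y) Y,
      ∫ w, payoff f Ostar (prepend p w) ∂ μ σ' τ' from hlt)
  refine ⟨σs, fun τs => ?_⟩
  -- choose near-optimal replies in the conditional games after entry
  have hτr' : ∀ r : List (X × Y), ∃ τr : Strategy (X × Y) Y,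
      ∫ w, payoff f (Oq (p ++ r)).1 (prepend (p ++ r) w) ∂ μ (after r σs) τr
        < phi μ f D (p ++ r) + ε/2 := by
    intro r
    apply exists_lt_of_ciInf_lt
    calc (⨅ τ'' : Strategy (X × Y) Y,
          ∫ w, payoff f (Oq (p ++ r)).1 (prepend (p ++ r) w) ∂ μ (after r σs) τ'')
        ≤ lvalAt μ (p ++ r) (payoff f (Oq (p ++ r)).1) := by
          apply le_ciSup (f := fun σ' : Strategy (X × Y) X => ⨅ τ'' : Strategy (X × Y) Y,
            ∫ w, payoff f (Oq (p ++ r)).1 (prepend (p ++ r) w) ∂ μ σ' τ'')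
          refine ⟨1, ?_⟩
          rintro x ⟨σ', rfl⟩
          exact (iInf_integral_mem_Icc μ hμ
            (measurable_payoff hfm (isOpen_measurableSet (Oq (p ++ r)).2.1))
            (payoff_mem_Icc hfb _) (p ++ r) σ').2
      _ < phi μ f D (p ++ r) + ε/4 := hOq (p ++ r)
      _ ≤ phi μ f D (p ++ r) + ε/2 := by linarith
  choose τr hτr using hτr'
  -- the modified reply strategy
  obtain ⟨τh, hagτ, hafter⟩ : ∃ τh : Strategy (X × Y) Y,
      (∀ h ∈ NonPast p V, τh h = τs h) ∧
      (∀ r ∈ BarAt p V, after r τh = τr r) := by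
    refine ⟨fun h => if hh : ∃ r ∈ BarAt p V, r <+: h
        then τr hh.choose (h.drop hh.choose.length) else τs h, ?_, ?_⟩
    · intro h hh
      exact dif_neg hh
    · intro r hr
      funext h
      show (if hh : ∃ r' ∈ BarAt p V, r' <+: r ++ h
        then τr hh.choose ((r ++ h).drop hh.choose.length) else τs (r ++ h)) = τr r h
      have hex : ∃ r' ∈ BarAt p V, r' <+: r ++ h := ⟨r, hr, h, rfl⟩
      rw [dif_pos hex]
      have hcs := hex.choose_spec
      have heq : hex.choose = r := by
        rcases List.prefix_or_prefix_of_prefix hcs.2 (⟨h, rfl⟩ : r <+: r ++ h) with h1 | h1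
        · exact barAt_antichain hcs.1 hr h1
        · exact (barAt_antichain hr hcs.1 h1).symm
      rw [heq, List.drop_left]
  have hag : ∀ h ∈ NonPast p V, σs h = σs h ∧ τh h = τs h :=
    fun h hh => ⟨rfl, hagτ h hh⟩
  -- apply the decomposition to the Ostar-game under (σs, τh)
  have hdec := decomp σs τh μ hμ hOsm hOsb p V
  have hA : phi μ f D p - ε/4 ≤ ∫ w, payoff f Ostar (prepend p w) ∂ μ σs τh :=
    le_of_lt (lt_of_lt_of_le hσs
      (ciInf_le (bddBelow_iInf_integral μ hμ hOsm hOsb p σs) τh))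
  rw [hdec] at hA
  -- identify the Miss part
  have hMiss : ∫ w in MissAt p V, payoff f Ostar (prepend p w) ∂ μ σs τh
      = ∫ w in MissAt p V, f (prepend p w) ∂ μ σs τs := by
    rw [show (μ σs τh).restrict (MissAt p V) = (μ σs τs).restrict (MissAt p V) from
      restrict_missAt_eq σs τh μ hμ hag]
    apply setIntegral_congr_fun (measurableSet_missAt p V)
    intro w hw
    apply payoff_eq_f hfb
    intro hcon
    rcases hcon with hbig | hcp
    · simp only [Set.mem_iUnion] at hbig
      obtain ⟨r, hr, hmem, -⟩ := hbig
      exact hw (Set.mem_biUnion hr (prepend_mem_cyl_append.1 hmem))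
    · exact hcp (prepend_mem_cyl p w)
  -- summability facts
  have hμHit : ∑' r : ↥(BarAt p V), μ σs τs (cyl r.1) = μ σs τs (HitAt p V) := by
    rw [hitAt_eq_iUnion]
    refine (measure_iUnion ?_ (fun r : ↥(BarAt p V) => measurableSet_cyl r.1)).symm
    intro a b hne'
    rw [Function.onFun, Set.disjoint_iff_inter_eq_empty]
    exact barAt_pairwise_disjoint a.2 b.2 (fun hh => hne' (Subtype.ext hh))
  haveI hprob : IsProbabilityMeasure (μ σs τs) := (hμ σs τs).1
  have hμsumne : ∑' r : ↥(BarAt p V), μ σs τs (cyl r.1) ≠ ⊤ := by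
    rw [hμHit]; exact measure_ne_top _ _
  have hSa : Summable (fun r : ↥(BarAt p V) => (μ σs τs (cyl r.1)).toReal) :=
    ENNReal.summable_toReal hμsumne
  have hsum_le_one : ∑' r : ↥(BarAt p V), (μ σs τs (cyl r.1)).toReal ≤ 1 := by
    calc ∑' r : ↥(BarAt p V), (μ σs τs (cyl r.1)).toReal
        = (∑' r : ↥(BarAt p V), μ σs τs (cyl r.1)).toReal :=
          (ENNReal.tsum_toReal_eq (fun r => measure_ne_top _ _)).symm
      _ = (μ σs τs (HitAt p V)).toReal := by rw [hμHit]
      _ ≤ 1 := by simpa using ENNReal.toReal_mono ENNReal.one_ne_top prob_le_one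
  have haR : ∀ r : ↥(BarAt p V), (0:ℝ) ≤ (μ σs τs (cyl r.1)).toReal :=
    fun r => ENNReal.toReal_nonneg
  -- identify and bound the sum part
  have hterm : ∀ r : ↥(BarAt p V),
      (μ σs τh (cyl r.1)).toReal *
        ∫ w, payoff f Ostar (prepend (p ++ r.1) w) ∂ μ (after r.1 σs) (after r.1 τh)
      ≤ (μ σs τs (cyl r.1)).toReal * (phi μ f D (p ++ r.1) + ε/2) := by
    intro r
    rw [show μ σs τh (cyl r.1) = μ σs τs (cyl r.1) from measure_cyl_bar_eq σs τh μ hμ hag r.2,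
      hafter r.1 r.2]
    apply mul_le_mul_of_nonneg_left _ (haR r)
    have hcong : ∫ w, payoff f Ostar (prepend (p ++ r.1) w) ∂ μ (after r.1 σs) (τr r.1)
        = ∫ w, payoff f (Oq (p ++ r.1)).1 (prepend (p ++ r.1) w) ∂ μ (after r.1 σs) (τr r.1) := by
      apply integral_congr_ae
      filter_upwards with w
      apply payoff_congr
      have hx : prepend (p ++ r.1) w ∈ cyl (p ++ r.1) := prepend_mem_cyl _ w
      constructor
      · rintro (hbig | hcp)
        · simp only [Set.mem_iUnion] at hbig
          obtain ⟨r', hr', hmem, hO⟩ := hbig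
          have : r' = r.1 := by
            have h1 : ∃ v, v ∈ cyl (p ++ r') ∩ cyl (p ++ r.1) := ⟨_, hmem, hx⟩
            obtain ⟨v, hv1, hv2⟩ := h1
            rcases prefix_or_prefix_of_mem_cyl hv1 hv2 with h2 | h2
            · exact barAt_antichain hr' r.2 ((List.prefix_append_right_inj p).1 h2)
            · exact (barAt_antichain r.2 hr' ((List.prefix_append_right_inj p).1 h2)).symm
          rwa [this] at hO
        · exact absurd (cyl_anti (⟨r.1, rfl⟩ : p <+: p ++ r.1) hx) hcp
      · intro hO
        exact Or.inl (Set.mem_biUnion r.2 ⟨hx, hO⟩)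
    rw [hcong]
    exact le_of_lt (hτr r.1)
  have hSl : Summable (fun r : ↥(BarAt p V) =>
      (μ σs τh (cyl r.1)).toReal *
        ∫ w, payoff f Ostar (prepend (p ++ r.1) w) ∂ μ (after r.1 σs) (after r.1 τh)) := by
    apply Summable.of_nonneg_of_le _ _ (hSa.mul_right (1 + ε/2))
    · intro r
      apply mul_nonneg ENNReal.toReal_nonneg
      haveI := (hμ (after r.1 σs) (after r.1 τh)).1
      exact (integral_mem_Icc (μ (after r.1 σs) (after r.1 τh))
        (hOsm.comp (measurable_prepend (p ++ r.1)) :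
          Measurable fun w => payoff f Ostar (prepend (p ++ r.1) w))
        (fun w => hOsb _)).1
    · intro r
      rw [show μ σs τh (cyl r.1) = μ σs τs (cyl r.1) from measure_cyl_bar_eq σs τh μ hμ hag r.2]
      apply mul_le_mul_of_nonneg_left _ (haR r)
      haveI := (hμ (after r.1 σs) (after r.1 τh)).1
      have h2 : ∫ w, payoff f Ostar (prepend (p ++ r.1) w)
            ∂ μ (after r.1 σs) (after r.1 τh) ≤ 1 :=
        (integral_mem_Icc (μ (after r.1 σs) (after r.1 τh))
          (hOsm.comp (measurable_prepend (p ++ r.1)) :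
            Measurable fun w => payoff f Ostar (prepend (p ++ r.1) w))
          (fun w => hOsb _)).2
      linarith
  have hSr : Summable (fun r : ↥(BarAt p V) =>
      (μ σs τs (cyl r.1)).toReal * (phi μ f D (p ++ r.1) + ε/2)) := by
    apply Summable.of_nonneg_of_le _ _ (hSa.mul_right (1 + ε/2))
    · intro r
      apply mul_nonneg (haR r)
      have := (phi_mem_Icc μ hμ f D hfm hfb (p ++ r.1)).1
      linarith
    · intro r
      apply mul_le_mul_of_nonneg_left _ (haR r)
      have := (phi_mem_Icc μ hμ f D hfm hfb (p ++ r.1)).2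
      linarith
  have hSphi : Summable (fun r : ↥(BarAt p V) =>
      (μ σs τs (cyl r.1)).toReal * phi μ f D (p ++ r.1)) := by
    apply Summable.of_nonneg_of_le _ _ hSa
    · intro r
      exact mul_nonneg (haR r) (phi_mem_Icc μ hμ f D hfm hfb (p ++ r.1)).1
    · intro r
      calc (μ σs τs (cyl r.1)).toReal * phi μ f D (p ++ r.1)
          ≤ (μ σs τs (cyl r.1)).toReal * 1 :=
            mul_le_mul_of_nonneg_left (phi_mem_Icc μ hμ f D hfm hfb (p ++ r.1)).2 (haR r)
        _ = _ := mul_one _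
  have hsum : (∑' r : ↥(BarAt p V), (μ σs τh (cyl r.1)).toReal *
        ∫ w, payoff f Ostar (prepend (p ++ r.1) w) ∂ μ (after r.1 σs) (after r.1 τh))
      ≤ (∑' r : ↥(BarAt p V), (μ σs τs (cyl r.1)).toReal * phi μ f D (p ++ r.1)) + ε/2 := by
    calc (∑' r : ↥(BarAt p V), (μ σs τh (cyl r.1)).toReal *
          ∫ w, payoff f Ostar (prepend (p ++ r.1) w) ∂ μ (after r.1 σs) (after r.1 τh))
        ≤ ∑' r : ↥(BarAt p V), (μ σs τs (cyl r.1)).toReal * (phi μ f D (p ++ r.1) + ε/2) :=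
          Summable.tsum_le_tsum hterm hSl hSr
      _ = (∑' r : ↥(BarAt p V), (μ σs τs (cyl r.1)).toReal * phi μ f D (p ++ r.1))
            + (∑' r : ↥(BarAt p V), (μ σs τs (cyl r.1)).toReal) * (ε/2) := by
          rw [← tsum_mul_right]
          rw [← Summable.tsum_add hSphi (hSa.mul_right (ε/2))]
          apply tsum_congr
          intro r
          ring
      _ ≤ (∑' r : ↥(BarAt p V), (μ σs τs (cyl r.1)).toReal * phi μ f D (p ++ r.1)) + ε/2 := by
          have : (∑' r : ↥(BarAt p V), (μ σs τs (cyl r.1)).toReal) * (ε/2) ≤ 1 * (ε/2) :=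
            mul_le_mul_of_nonneg_right hsum_le_one (by linarith)
          linarith
  rw [hMiss] at hA
  linarith

/-! ### one phase of the global construction -/

lemma phase_step (V : ℕ → Set (Play (X × Y)))
    (σstar : Strategy (X × Y) X) (τs : Strategy (X × Y) Y)
    (Sb : List (X × Y) → ℕ → Strategy (X × Y) X)
    {k : ℕ} {εk : ℝ} (hεk : 0 ≤ εk)
    (hSb : ∀ q ∈ Reach V k, ∀ τ' : Strategy (X × Y) Y,
      phi μ f D q - εk ≤
        (∑' r : ↥(BarAt q (V k)), (μ (Sb q k) τ' (cyl r.1)).toReal * phi μ f D (q ++ r.1))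
          + ∫ w in MissAt q (V k), f (prepend q w) ∂ μ (Sb q k) τ')
    (hkey : ∀ q ∈ Reach V k, ∀ h ∈ NonPast q (V k), σstar (q ++ h) = Sb q k h) :
    ∫ w, PhiF (phi μ f D) f V k w ∂ μ σstar τs - εk
      ≤ ∫ w, PhiF (phi μ f D) f V (k+1) w ∂ μ σstar τs := by
  set m := μ σstar τs with hm
  haveI hprob : IsProbabilityMeasure m := (hμ σstar τs).1
  have hphib : ∀ q, phi μ f D q ∈ Set.Icc (0:ℝ) 1 := phi_mem_Icc μ hμ f D hfm hfb
  have hΦm : ∀ k', Measurable (PhiF (phi μ f D) f V k') := fun k' => measurable_PhiF hfm V k'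
  have hΦb : ∀ k' w, PhiF (phi μ f D) f V k' w ∈ Set.Icc (0:ℝ) 1 :=
    fun k' w => PhiF_mem_Icc hphib hfb w
  have hintk : Integrable (PhiF (phi μ f D) f V k) m := integrable_of_bounds (hΦm k) (hΦb k)
  have hintk1 : Integrable (PhiF (phi μ f D) f V (k+1)) m :=
    integrable_of_bounds (hΦm (k+1)) (hΦb (k+1))
  -- split both integrals over FS V k
  rw [← integral_add_compl (measurableSet_FS V k) hintk1,
    ← integral_add_compl (measurableSet_FS V k) hintk]
  -- the complements agree
  have hcompl : ∫ w in (FS V k)ᶜ, PhiF (phi μ f D) f V (k+1) w ∂ m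
      = ∫ w in (FS V k)ᶜ, PhiF (phi μ f D) f V k w ∂ m := by
    apply setIntegral_congr_fun (measurableSet_FS V k).compl
    intro w hw
    rw [PhiF_off (fun hw2 => hw (FS_antitone V k hw2)), PhiF_off hw]
  rw [hcompl]
  -- decompose the FS-part into cylinders
  have hdis : ∀ (k' : ℕ), Pairwise (Function.onFun Disjoint
      (fun q : ↥(Reach V k') => cyl q.1)) := by
    intro k' a b hne
    rw [Function.onFun, Set.disjoint_iff_inter_eq_empty]
    exact reach_cyl_disjoint a.2 b.2 (fun hh => hne (Subtype.ext hh))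
  have hiu : ∀ {g : Play (X × Y) → ℝ}, Integrable g m →
      ∫ w in FS V k, g w ∂ m = ∑' q : ↥(Reach V k), ∫ w in cyl q.1, g w ∂ m := by
    intro g hg
    rw [FS_eq_iUnion]
    exact integral_iUnion (s := fun q : ↥(Reach V k) => cyl q.1)
      (fun q => measurableSet_cyl q.1) (hdis k) hg.integrableOn
  rw [hiu hintk, hiu hintk1]
  -- summability facts
  have hμFS : ∑' q : ↥(Reach V k), m (cyl q.1) = m (FS V k) := by
    rw [FS_eq_iUnion]
    exact (measure_iUnion (hdis k) (fun q : ↥(Reach V k) => measurableSet_cyl q.1)).symm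
  have hμsumne : ∑' q : ↥(Reach V k), m (cyl q.1) ≠ ⊤ := by
    rw [hμFS]; exact measure_ne_top _ _
  have hSa : Summable (fun q : ↥(Reach V k) => (m (cyl q.1)).toReal) :=
    ENNReal.summable_toReal hμsumne
  have hsum_le_one : ∑' q : ↥(Reach V k), (m (cyl q.1)).toReal ≤ 1 := by
    calc ∑' q : ↥(Reach V k), (m (cyl q.1)).toReal
        = (∑' q : ↥(Reach V k), m (cyl q.1)).toReal :=
          (ENNReal.tsum_toReal_eq (fun q => measure_ne_top _ _)).symm
      _ = (m (FS V k)).toReal := by rw [hμFS]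
      _ ≤ 1 := by simpa using ENNReal.toReal_mono ENNReal.one_ne_top prob_le_one
  have haR : ∀ q : ↥(Reach V k), (0:ℝ) ≤ (m (cyl q.1)).toReal := fun q => ENNReal.toReal_nonneg
  -- value of Φk on each cylinder
  have hΦkcyl : ∀ q : ↥(Reach V k), ∫ w in cyl q.1, PhiF (phi μ f D) f V k w ∂ m
      = (m (cyl q.1)).toReal * phi μ f D q.1 := by
    intro q
    rw [setIntegral_congr_fun (measurableSet_cyl q.1)
      (fun w hw => PhiF_on_cyl q.2 hw), setIntegral_const, smul_eq_mul, Measure.real]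
  -- the conditional value of Φ(k+1) on each cylinder
  have hcond : ∀ q : ↥(Reach V k), ∫ w in cyl q.1, PhiF (phi μ f D) f V (k+1) w ∂ m
      = (m (cyl q.1)).toReal *
        ∫ w, PhiF (phi μ f D) f V (k+1) (prepend q.1 w) ∂ μ (after q.1 σstar) (after q.1 τs) := by
    intro q
    rw [setIntegral_cyl σstar τs μ hμ (hΦm (k+1)) (hΦb (k+1)) q.1, (hμ σstar τs).2]
  have hinner_mem : ∀ q : ↥(Reach V k),
      (∫ w, PhiF (phi μ f D) f V (k+1) (prepend q.1 w)
          ∂ μ (after q.1 σstar) (after q.1 τs)) ∈ Set.Icc (0:ℝ) 1 := by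
    intro q
    exact integral_prepend_mem_Icc μ hμ (hΦm (k+1)) (hΦb (k+1)) q.1 _ _
  -- the conditional value is at least phi q - εk
  have hinner : ∀ q : ↥(Reach V k),
      phi μ f D q.1 - εk ≤ ∫ w, PhiF (phi μ f D) f V (k+1) (prepend q.1 w)
        ∂ μ (after q.1 σstar) (after q.1 τs) := by
    intro q
    have hag : ∀ h ∈ NonPast q.1 (V k),
        (after q.1 σstar) h = Sb q.1 k h ∧ (after q.1 τs) h = (after q.1 τs) h :=
      fun h hh => ⟨hkey q.1 q.2 h hh, rfl⟩
    rw [decomp (after q.1 σstar) (after q.1 τs) μ hμ (hΦm (k+1)) (hΦb (k+1)) q.1 (V k)]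
    have hterm : ∀ r : ↥(BarAt q.1 (V k)),
        (μ (after q.1 σstar) (after q.1 τs) (cyl r.1)).toReal *
          ∫ w, PhiF (phi μ f D) f V (k+1) (prepend (q.1 ++ r.1) w)
            ∂ μ (after r.1 (after q.1 σstar)) (after r.1 (after q.1 τs))
        = (μ (Sb q.1 k) (after q.1 τs) (cyl r.1)).toReal * phi μ f D (q.1 ++ r.1) := by
      intro r
      rw [measure_cyl_bar_eq (after q.1 σstar) (after q.1 τs) μ hμ hag r.2]
      congr 1
      haveI := (hμ (after r.1 (after q.1 σstar)) (after r.1 (after q.1 τs))).1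
      have hreach : q.1 ++ r.1 ∈ Reach V (k+1) := ⟨q.1, q.2, r.1, r.2, rfl⟩
      have : ∀ w, PhiF (phi μ f D) f V (k+1) (prepend (q.1 ++ r.1) w)
          = phi μ f D (q.1 ++ r.1) :=
        fun w => PhiF_on_cyl hreach (prepend_mem_cyl _ w)
      rw [integral_congr_ae (Filter.Eventually.of_forall this)]
      simp
    have hmiss : ∫ w in MissAt q.1 (V k), PhiF (phi μ f D) f V (k+1) (prepend q.1 w)
          ∂ μ (after q.1 σstar) (after q.1 τs)
        = ∫ w in MissAt q.1 (V k), f (prepend q.1 w) ∂ μ (Sb q.1 k) (after q.1 τs) := by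
      rw [show (μ (after q.1 σstar) (after q.1 τs)).restrict (MissAt q.1 (V k))
          = (μ (Sb q.1 k) (after q.1 τs)).restrict (MissAt q.1 (V k)) from
        restrict_missAt_eq (after q.1 σstar) (after q.1 τs) μ hμ hag]
      apply setIntegral_congr_fun (measurableSet_missAt _ _)
      intro w hw
      apply PhiF_off
      rw [← Set.mem_preimage, prepend_preimage_FS q.2]
      exact hw
    rw [tsum_congr hterm, hmiss]
    exact hSb q.1 q.2 (after q.1 τs)
  -- put everything together
  have hge : ∀ q : ↥(Reach V k),
      (m (cyl q.1)).toReal * phi μ f D q.1 - (m (cyl q.1)).toReal * εk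
        ≤ ∫ w in cyl q.1, PhiF (phi μ f D) f V (k+1) w ∂ m := by
    intro q
    rw [hcond q, ← mul_sub]
    exact mul_le_mul_of_nonneg_left (hinner q) (haR q)
  have hSphi : Summable (fun q : ↥(Reach V k) => (m (cyl q.1)).toReal * phi μ f D q.1) := by
    apply Summable.of_nonneg_of_le _ _ hSa
    · exact fun q => mul_nonneg (haR q) (hphib q.1).1
    · intro q
      calc (m (cyl q.1)).toReal * phi μ f D q.1 ≤ (m (cyl q.1)).toReal * 1 :=
            mul_le_mul_of_nonneg_left (hphib q.1).2 (haR q)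
        _ = _ := mul_one _
  have hSr : Summable (fun q : ↥(Reach V k) =>
      ∫ w in cyl q.1, PhiF (phi μ f D) f V (k+1) w ∂ m) := by
    apply Summable.of_nonneg_of_le _ _ hSa
    · intro q
      rw [hcond q]
      exact mul_nonneg (haR q) (hinner_mem q).1
    · intro q
      rw [hcond q]
      calc (m (cyl q.1)).toReal *
            (∫ w, PhiF (phi μ f D) f V (k+1) (prepend q.1 w)
              ∂ μ (after q.1 σstar) (after q.1 τs))
          ≤ (m (cyl q.1)).toReal * 1 :=
            mul_le_mul_of_nonneg_left (hinner_mem q).2 (haR q)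
        _ = _ := mul_one _
  have hmain : (∑' q : ↥(Reach V k), (m (cyl q.1)).toReal * phi μ f D q.1) - εk
      ≤ ∑' q : ↥(Reach V k), ∫ w in cyl q.1, PhiF (phi μ f D) f V (k+1) w ∂ m := by
    have h1 : (∑' q : ↥(Reach V k), ((m (cyl q.1)).toReal * phi μ f D q.1
          - (m (cyl q.1)).toReal * εk))
        ≤ ∑' q : ↥(Reach V k), ∫ w in cyl q.1, PhiF (phi μ f D) f V (k+1) w ∂ m :=
      Summable.tsum_le_tsum hge (hSphi.sub (hSa.mul_right εk)) hSr
    rw [Summable.tsum_sub hSphi (hSa.mul_right εk), tsum_mul_right] at h1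
    have h2 : (∑' q : ↥(Reach V k), (m (cyl q.1)).toReal) * εk ≤ 1 * εk :=
      mul_le_mul_of_nonneg_right hsum_le_one hεk
    linarith
  rw [tsum_congr hΦkcyl]
  linarith [hmain]

/-! ### the global construction -/

lemma hard_side (hDm : MeasurableSet D) (V : ℕ → Set (Play (X × Y)))
    (hVo : ∀ k, IsOpen (V k)) (hVD : ∀ k, D ⊆ V k) (hVI : (⋂ k, V k) ⊆ D)
    {ε : ℝ} (hε : 0 < ε) :
    ∃ σs : Strategy (X × Y) X, ∀ τs : Strategy (X × Y) Y,
      phi μ f D [] - ε ≤ ∫ w, payoff f D w ∂ μ σs τs := by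
  classical
  have hSb' : ∀ (q : List (X × Y)) (k : ℕ), ∃ σb : Strategy (X × Y) X,
      ∀ τ' : Strategy (X × Y) Y,
      phi μ f D q - ε / 2 ^ (k+1) ≤
        (∑' r : ↥(BarAt q (V k)), (μ σb τ' (cyl r.1)).toReal * phi μ f D (q ++ r.1))
          + ∫ w in MissAt q (V k), f (prepend q w) ∂ μ σb τ' :=
    fun q k => step_exists μ hμ f D hfm hfb q (hVo k) (hVD k) (by positivity)
  choose Sb hSb using hSb'
  -- uniqueness of phase data
  have haux : ∀ (l : List (X × Y)) (k k' : ℕ) (q q' : List (X × Y)),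
      q ∈ Reach V k → q <+: l → (¬∃ r, cyl (q ++ r) ⊆ V k ∧ q ++ r <+: l) →
      q' ∈ Reach V k' → q' <+: l → k = k' → q = q' := by
    intro l k k' q q' hq hql _ hq' hq'l hkk
    subst hkk
    exact reach_unique hq hq' hql hq'l
  have hauxk : ∀ (l : List (X × Y)) (k k' : ℕ) (q q' : List (X × Y)), k ≤ k' →
      q ∈ Reach V k → q <+: l → (¬∃ r, cyl (q ++ r) ⊆ V k ∧ q ++ r <+: l) →
      q' ∈ Reach V k' → q' <+: l → k = k' := by
    intro l k k' q q' hkk hq hql hnoent hq' hq'l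
    rcases Nat.lt_or_ge k k' with hlt | hge
    · exfalso
      obtain ⟨a, ha, r, hr, hpre⟩ := reach_descend hq' k hlt
      have haq : a = q :=
        reach_unique ha hq (((List.prefix_append a r).trans hpre).trans hq'l) hql
      subst haq
      exact hnoent ⟨r, hr.1, hpre.trans hq'l⟩
    · omega
  have huniq : ∀ (l : List (X × Y)) (kq kq' : ℕ × List (X × Y)),
      (kq.2 ∈ Reach V kq.1 ∧ kq.2 <+: l ∧
        ¬∃ r, cyl (kq.2 ++ r) ⊆ V kq.1 ∧ kq.2 ++ r <+: l) →
      (kq'.2 ∈ Reach V kq'.1 ∧ kq'.2 <+: l ∧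
        ¬∃ r, cyl (kq'.2 ++ r) ⊆ V kq'.1 ∧ kq'.2 ++ r <+: l) →
      kq = kq' := by
    rintro l ⟨k, q⟩ ⟨k', q'⟩ ⟨hq, hql, hn⟩ ⟨hq', hq'l, hn'⟩
    have hkk' : k = k' := by
      rcases le_total k k' with h | h
      · exact hauxk l k k' q q' h hq hql hn hq' hq'l
      · exact (hauxk l k' k q' q h hq' hq'l hn' hq hql).symm
    have hqq' : q = q' := haux l k k' q q' hq hql hn hq' hq'l hkk'
    rw [hkk', hqq']
  -- the global strategy
  obtain ⟨σstar, hkey⟩ : ∃ σstar : Strategy (X × Y) X, ∀ k q, q ∈ Reach V k →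
      ∀ h ∈ NonPast q (V k), σstar (q ++ h) = Sb q k h := by
    refine ⟨fun l => if H : ∃ kq : ℕ × List (X × Y), kq.2 ∈ Reach V kq.1 ∧ kq.2 <+: l ∧
        ¬∃ r, cyl (kq.2 ++ r) ⊆ V kq.1 ∧ kq.2 ++ r <+: l
      then Sb H.choose.2 H.choose.1 (l.drop H.choose.2.length)
      else Classical.arbitrary _, ?_⟩
    intro k q hq h hh
    have hP : q ∈ Reach V k ∧ q <+: q ++ h ∧
        ¬∃ r, cyl (q ++ r) ⊆ V k ∧ q ++ r <+: q ++ h := by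
      refine ⟨hq, List.prefix_append q h, ?_⟩
      rintro ⟨r, hsub, hpre⟩
      obtain ⟨r₀, hr₀, hr₀r⟩ := exists_bar_prefix hsub
      exact hh ⟨r₀, hr₀, hr₀r.trans ((List.prefix_append_right_inj q).1 hpre)⟩
    have H : ∃ kq : ℕ × List (X × Y), kq.2 ∈ Reach V kq.1 ∧ kq.2 <+: q ++ h ∧
        ¬∃ r, cyl (kq.2 ++ r) ⊆ V kq.1 ∧ kq.2 ++ r <+: q ++ h := ⟨(k, q), hP⟩
    show (if H' : ∃ kq : ℕ × List (X × Y), kq.2 ∈ Reach V kq.1 ∧ kq.2 <+: q ++ h ∧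
        ¬∃ r, cyl (kq.2 ++ r) ⊆ V kq.1 ∧ kq.2 ++ r <+: q ++ h
      then Sb H'.choose.2 H'.choose.1 ((q ++ h).drop H'.choose.2.length)
      else Classical.arbitrary _) = Sb q k h
    rw [dif_pos H]
    have heq : H.choose = (k, q) := huniq (q ++ h) _ _ H.choose_spec hP
    rw [heq]
    simp [List.drop_left]
  refine ⟨σstar, fun τs => ?_⟩
  set m := μ σstar τs with hmdef
  haveI hprob : IsProbabilityMeasure m := (hμ σstar τs).1
  have hphib : ∀ q, phi μ f D q ∈ Set.Icc (0:ℝ) 1 := phi_mem_Icc μ hμ f D hfm hfb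
  have hΦint : ∀ k, Integrable (PhiF (phi μ f D) f V k) m := fun k =>
    integrable_of_bounds (measurable_PhiF hfm V k) (PhiF_mem_Icc hphib hfb)
  have hstep : ∀ k, ∫ w, PhiF (phi μ f D) f V k w ∂ m - ε / 2^(k+1)
      ≤ ∫ w, PhiF (phi μ f D) f V (k+1) w ∂ m := by
    intro k
    exact phase_step μ hμ f D hfm hfb V σstar τs Sb (by positivity)
      (fun q _ τ' => hSb q k τ') (fun q hq h hh => hkey k q hq h hh)
  have hJ0 : ∫ w, PhiF (phi μ f D) f V 0 w ∂ m = phi μ f D [] := by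
    have h1 : ∀ w, PhiF (phi μ f D) f V 0 w = phi μ f D [] := by
      intro w
      exact PhiF_on_cyl rfl (by rw [cyl_nil]; trivial)
    rw [integral_congr_ae (Filter.Eventually.of_forall h1)]
    simp
  have hJge : ∀ k, phi μ f D [] - ε + ε/2^k ≤ ∫ w, PhiF (phi μ f D) f V k w ∂ m := by
    intro k
    induction k with
    | zero => rw [hJ0]; norm_num
    | succ k ih =>
      have h2 : ε/2^(k+1) = ε/2^k/2 := by rw [pow_succ]; ring
      have h3 := hstep k
      rw [h2] at h3 ⊢
      linarith
  set E : Set (Play (X × Y)) := ⋂ k, FS V k with hE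
  have hEm : MeasurableSet E := MeasurableSet.iInter (fun k => measurableSet_FS V k)
  have hED : E ⊆ D := by
    intro w hw
    apply hVI
    apply Set.mem_iInter.2
    intro k
    exact FS_succ_subset V k (Set.mem_iInter.1 hw (k+1))
  have hanti : Antitone (fun k => FS V k) := antitone_nat_of_succ_le (fun k => FS_antitone V k)
  have hm1 : Tendsto (fun k => (m (FS V k)).toReal) atTop (𝓝 ((m E).toReal)) := by
    have h1 : Tendsto (fun k => m (FS V k)) atTop (𝓝 (m E)) :=
      tendsto_measure_iInter_atTop (μ := m)
        (fun k => (measurableSet_FS V k).nullMeasurableSet) hanti ⟨0, measure_ne_top _ _⟩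
    exact (ENNReal.tendsto_toReal (measure_ne_top m E)).comp h1
  have hintf : Integrable f m := integrable_of_bounds hfm hfb
  have hm2 : Tendsto (fun k => ∫ w in (FS V k)ᶜ, f w ∂ m) atTop (𝓝 (∫ w in Eᶜ, f w ∂ m)) := by
    have hEc : Eᶜ = ⋃ k, (FS V k)ᶜ := by rw [hE, Set.compl_iInter]
    rw [hEc]
    exact tendsto_setIntegral_of_monotone (fun k => (measurableSet_FS V k).compl)
      (fun i j hij => Set.compl_subset_compl.2 (hanti hij)) hintf.integrableOn
  have hbound : ∀ k, ∫ w, PhiF (phi μ f D) f V k w ∂ m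
      ≤ (m (FS V k)).toReal + ∫ w in (FS V k)ᶜ, f w ∂ m := by
    intro k
    rw [← integral_add_compl (measurableSet_FS V k) (hΦint k)]
    apply add_le_add
    · calc ∫ w in FS V k, PhiF (phi μ f D) f V k w ∂ m
          ≤ ∫ _ in FS V k, (1:ℝ) ∂ m :=
            setIntegral_mono_on (hΦint k).integrableOn (integrable_const 1).integrableOn
              (measurableSet_FS V k) (fun w _ => (PhiF_mem_Icc hphib hfb w).2)
        _ = (m (FS V k)).toReal := by simp [setIntegral_const, Measure.real]
    · apply le_of_eq
      exact setIntegral_congr_fun (measurableSet_FS V k).compl (fun w hw => PhiF_off hw)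
  have hlim : phi μ f D [] - ε ≤ (m E).toReal + ∫ w in Eᶜ, f w ∂ m := by
    apply ge_of_tendsto' (hm1.add hm2)
    intro k
    have h1 := hJge k
    have h2 := hbound k
    have h3 : (0:ℝ) ≤ ε/2^k := by positivity
    linarith
  have hfinal : (m E).toReal + ∫ w in Eᶜ, f w ∂ m ≤ ∫ w, payoff f D w ∂ m := by
    have hintp : Integrable (payoff f D) m :=
      integrable_of_bounds (measurable_payoff hfm hDm) (payoff_mem_Icc hfb D)
    rw [← integral_add_compl hEm hintp]
    apply add_le_add
    · have h1 : ∫ w in E, payoff f D w ∂ m = ∫ _ in E, (1:ℝ) ∂ m :=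
        setIntegral_congr_fun hEm (fun w hw => payoff_eq_one hfb (hED hw))
      rw [h1]
      simp [setIntegral_const, Measure.real]
    · exact setIntegral_mono_on hintf.integrableOn hintp.integrableOn hEm.compl
        (fun w _ => le_max_left _ _)
  linarith

end Game

/-! ### the degenerate case: coarse σ-algebras contradict `hμ` -/

section Dichotomy

variable {X Y : Type} [Fintype X] [Nonempty X] [Fintype Y] [Nonempty Y]
  [MeasurableSpace X] [MeasurableSpace Y]

lemma cylProb_singleton (σ : Strategy (X × Y) X) (τ : Strategy (X × Y) Y) (z : X × Y) :
    cylProb σ τ [z] = σ [] z.1 * τ [] z.2 := by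
  simp [cylProb]

lemma mem_cyl_singleton {w : Play (X × Y)} {z : X × Y} : w ∈ cyl [z] ↔ w 0 = z := by
  constructor
  · intro hw
    exact hw ⟨0, by norm_num⟩
  · intro hw i
    have h2 : i.1 < 1 := by simpa using i.2
    have h3 : i.1 = 0 := by omega
    simp only [List.get_eq_getElem, h3]
    simpa using hw

lemma dichotomy_aux (μ : Strategy (X × Y) X → Strategy (X × Y) Y → Measure (Play (X × Y)))
    (hμ : ∀ σ τ, IsInduced σ τ (μ σ τ)) (z0 z1 : X × Y)
    (s : X × Y → X × Y) (hsat : ∀ S : Set (X × Y), MeasurableSet S → s ⁻¹' S = S)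
    (hs10 : s z1 = z0)
    (σ' : Strategy (X × Y) X) (τ' : Strategy (X × Y) Y)
    (h0 : cylProb σ' τ' [z0] = 0) (h1 : cylProb σ' τ' [z1] = 1) : False := by
  classical
  set e : Play (X × Y) → Play (X × Y) := fun w i => if i = 0 then s (w 0) else w i with he
  -- every measurable set of plays is saturated under e
  have hsatP : ∀ E : Set (Play (X × Y)), MeasurableSet E → e ⁻¹' E = E := by
    set m' : MeasurableSpace (Play (X × Y)) :=
      { MeasurableSet' := fun E => e ⁻¹' E = E
        measurableSet_empty := by simp
        measurableSet_compl := fun E hE => by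
          show e ⁻¹' Eᶜ = Eᶜ
          rw [Set.preimage_compl]
          show (e ⁻¹' E)ᶜ = Eᶜ
          rw [show e ⁻¹' E = E from hE]
        measurableSet_iUnion := fun g hg => by
          show e ⁻¹' (⋃ i, g i) = ⋃ i, g i
          rw [Set.preimage_iUnion]
          exact Set.iUnion_congr hg } with hm'
    have hle : (MeasurableSpace.pi : MeasurableSpace (Play (X × Y))) ≤ m' := by
      have hpi : (MeasurableSpace.pi : MeasurableSpace (Play (X × Y))) =
          ⨆ i : ℕ, MeasurableSpace.comap (fun w : Play (X × Y) => w i) inferInstance := rfl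
      rw [hpi]
      refine iSup_le fun i => ?_
      intro E hE
      rw [MeasurableSpace.measurableSet_comap] at hE
      obtain ⟨S, hS, rfl⟩ := hE
      show e ⁻¹' ((fun w : Play (X × Y) => w i) ⁻¹' S) = _
      by_cases hi : i = 0
      · subst hi
        ext w
        show (if (0:ℕ) = 0 then s (w 0) else w 0) ∈ S ↔ w 0 ∈ S
        rw [if_pos rfl]
        conv_rhs => rw [← hsat S hS]
        exact Iff.rfl
      · ext w
        show (if i = 0 then s (w 0) else w i) ∈ S ↔ w i ∈ S
        rw [if_neg hi]
    exact fun E hE => hle E hE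
  -- now derive the contradiction
  haveI hprob : IsProbabilityMeasure (μ σ' τ') := (hμ σ' τ').1
  have hc0 : μ σ' τ' (cyl [z0]) = 0 := by rw [(hμ σ' τ').2, h0]
  have hc1 : μ σ' τ' (cyl [z1]) = 1 := by rw [(hμ σ' τ').2, h1]
  set T := toMeasurable (μ σ' τ') (cyl [z0]) with hT
  have hTm : MeasurableSet T := measurableSet_toMeasurable _ _
  have hT0 : μ σ' τ' T = 0 := by rw [hT, measure_toMeasurable, hc0]
  have hsub : cyl [z1] ⊆ T := by
    intro w hw
    have hew : e w ∈ cyl [z0] := by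
      rw [mem_cyl_singleton]
      show (if (0:ℕ) = 0 then s (w 0) else w 0) = z0
      rw [if_pos rfl, mem_cyl_singleton.1 hw, hs10]
    have : w ∈ e ⁻¹' T := subset_toMeasurable _ _ hew
    rwa [hsatP T hTm] at this
  have : (1 : ENNReal) ≤ 0 := by
    calc (1 : ENNReal) = μ σ' τ' (cyl [z1]) := hc1.symm
      _ ≤ μ σ' τ' T := measure_mono hsub
      _ = 0 := hT0
  simp at this

/-- if not every subset of `X` is measurable, `hμ` is contradictory -/
lemma dichotomy_X (μ : Strategy (X × Y) X → Strategy (X × Y) Y → Measure (Play (X × Y)))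
    (hμ : ∀ σ τ, IsInduced σ τ (μ σ τ)) (hX : ¬ ∀ S : Set X, MeasurableSet S) : False := by
  classical
  -- find two points not separated by the σ-algebra
  have hex : ∃ x x' : X, x ≠ x' ∧ ∀ S : Set X, MeasurableSet S → (x ∈ S ↔ x' ∈ S) := by
    have hsing : ∃ x : X, ¬ MeasurableSet ({x} : Set X) := by
      by_contra hcon
      push_neg at hcon
      haveI : MeasurableSingletonClass X := ⟨hcon⟩
      exact hX (fun S => S.toFinite.measurableSet)
    obtain ⟨x, hx⟩ := hsing
    have hA : MeasurableSet (⋂ S ∈ {S : Set X | MeasurableSet S ∧ x ∈ S}, S) :=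
      MeasurableSet.biInter (Set.to_countable _) (fun S hS => hS.1)
    have hxA : x ∈ ⋂ S ∈ {S : Set X | MeasurableSet S ∧ x ∈ S}, S :=
      Set.mem_biInter (fun S hS => hS.2)
    have hAne : (⋂ S ∈ {S : Set X | MeasurableSet S ∧ x ∈ S}, S) ≠ {x} := by
      intro hcon
      rw [hcon] at hA
      exact hx hA
    have : ∃ x' ∈ ⋂ S ∈ {S : Set X | MeasurableSet S ∧ x ∈ S}, S, x' ≠ x := by
      by_contra hcon
      push_neg at hcon
      apply hAne
      apply Set.eq_singleton_iff_unique_mem.2 ⟨hxA, fun x' hx' => hcon x' hx'⟩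
    obtain ⟨x', hx'A, hx'x⟩ := this
    refine ⟨x, x', hx'x.symm, fun S hS => ⟨fun hxS => ?_, fun hx'S => ?_⟩⟩
    · exact Set.mem_iInter₂.1 hx'A S ⟨hS, hxS⟩
    · by_contra hxS
      have : x' ∈ Sᶜ := Set.mem_iInter₂.1 hx'A Sᶜ ⟨hS.compl, hxS⟩
      exact this hx'S
  obtain ⟨x, x', hne, hkey⟩ := hex
  obtain ⟨y0⟩ := (inferInstance : Nonempty Y)
  set swap : X → X := fun z => if z = x then x' else if z = x' then x else z with hswap
  have hswap_pre : ∀ S : Set X, MeasurableSet S → swap ⁻¹' S = S := by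
    intro S hS
    ext z
    simp only [Set.mem_preimage, hswap]
    by_cases h1 : z = x
    · subst h1
      rw [if_pos rfl]
      exact (hkey S hS).symm
    · rw [if_neg h1]
      by_cases h2 : z = x'
      · subst h2
        rw [if_pos rfl]
        exact hkey S hS
      · rw [if_neg h2]
  refine dichotomy_aux μ hμ (x, y0) (x', y0) (fun z => (swap z.1, z.2)) ?_ ?_
    (fun _ => PMF.pure x') (fun _ => PMF.pure y0) ?_ ?_
  · -- saturation on X × Y
    intro S hS
    have hPr : (Prod.instMeasurableSpace : MeasurableSpace (X × Y)) =
        MeasurableSpace.comap Prod.fst inferInstance ⊔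
          MeasurableSpace.comap Prod.snd inferInstance := rfl
    have hle : (Prod.instMeasurableSpace : MeasurableSpace (X × Y)) ≤
        ({ MeasurableSet' := fun S => (fun z : X × Y => (swap z.1, z.2)) ⁻¹' S = S
           measurableSet_empty := by simp
           measurableSet_compl := fun E hE => by
             show (fun z : X × Y => (swap z.1, z.2)) ⁻¹' Eᶜ = Eᶜ
             rw [Set.preimage_compl]
             show ((fun z : X × Y => (swap z.1, z.2)) ⁻¹' E)ᶜ = Eᶜ
             rw [show (fun z : X × Y => (swap z.1, z.2)) ⁻¹' E = E from hE]
           measurableSet_iUnion := fun g hg => by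
             show (fun z : X × Y => (swap z.1, z.2)) ⁻¹' (⋃ i, g i) = ⋃ i, g i
             rw [Set.preimage_iUnion]; exact Set.iUnion_congr hg } :
          MeasurableSpace (X × Y)) := by
      rw [hPr]
      refine sup_le ?_ ?_
      · intro E hE
        rw [MeasurableSpace.measurableSet_comap] at hE
        obtain ⟨A, hA, rfl⟩ := hE
        show (fun z : X × Y => (swap z.1, z.2)) ⁻¹' (Prod.fst ⁻¹' A) = Prod.fst ⁻¹' A
        ext z
        show swap z.1 ∈ A ↔ z.1 ∈ A
        conv_rhs => rw [← hswap_pre A hA]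
        exact Iff.rfl
      · intro E hE
        rw [MeasurableSpace.measurableSet_comap] at hE
        obtain ⟨A, hA, rfl⟩ := hE
        rfl
    exact hle S hS
  · simp [hswap, hne.symm]
  · rw [cylProb_singleton]
    have h1 : (PMF.pure x' : PMF X) x = 0 := by
      rw [PMF.pure_apply, if_neg hne]
    simp [h1]
  · rw [cylProb_singleton]
    simp [PMF.pure_apply]

/-- if not every subset of `Y` is measurable, `hμ` is contradictory -/
lemma dichotomy_Y (μ : Strategy (X × Y) X → Strategy (X × Y) Y → Measure (Play (X × Y)))
    (hμ : ∀ σ τ, IsInduced σ τ (μ σ τ)) (hY : ¬ ∀ S : Set Y, MeasurableSet S) : False := by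
  classical
  have hex : ∃ y y' : Y, y ≠ y' ∧ ∀ S : Set Y, MeasurableSet S → (y ∈ S ↔ y' ∈ S) := by
    have hsing : ∃ y : Y, ¬ MeasurableSet ({y} : Set Y) := by
      by_contra hcon
      push_neg at hcon
      haveI : MeasurableSingletonClass Y := ⟨hcon⟩
      exact hY (fun S => S.toFinite.measurableSet)
    obtain ⟨y, hy⟩ := hsing
    have hA : MeasurableSet (⋂ S ∈ {S : Set Y | MeasurableSet S ∧ y ∈ S}, S) :=
      MeasurableSet.biInter (Set.to_countable _) (fun S hS => hS.1)
    have hyA : y ∈ ⋂ S ∈ {S : Set Y | MeasurableSet S ∧ y ∈ S}, S :=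
      Set.mem_biInter (fun S hS => hS.2)
    have hAne : (⋂ S ∈ {S : Set Y | MeasurableSet S ∧ y ∈ S}, S) ≠ {y} := by
      intro hcon
      rw [hcon] at hA
      exact hy hA
    have : ∃ y' ∈ ⋂ S ∈ {S : Set Y | MeasurableSet S ∧ y ∈ S}, S, y' ≠ y := by
      by_contra hcon
      push_neg at hcon
      apply hAne
      apply Set.eq_singleton_iff_unique_mem.2 ⟨hyA, fun y' hy' => hcon y' hy'⟩
    obtain ⟨y', hy'A, hy'y⟩ := this
    refine ⟨y, y', hy'y.symm, fun S hS => ⟨fun hyS => ?_, fun hy'S => ?_⟩⟩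
    · exact Set.mem_iInter₂.1 hy'A S ⟨hS, hyS⟩
    · by_contra hyS
      have : y' ∈ Sᶜ := Set.mem_iInter₂.1 hy'A Sᶜ ⟨hS.compl, hyS⟩
      exact this hy'S
  obtain ⟨y, y', hne, hkey⟩ := hex
  obtain ⟨x0⟩ := (inferInstance : Nonempty X)
  set swap : Y → Y := fun z => if z = y then y' else if z = y' then y else z with hswap
  have hswap_pre : ∀ S : Set Y, MeasurableSet S → swap ⁻¹' S = S := by
    intro S hS
    ext z
    simp only [Set.mem_preimage, hswap]
    by_cases h1 : z = y
    · subst h1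
      rw [if_pos rfl]
      exact (hkey S hS).symm
    · rw [if_neg h1]
      by_cases h2 : z = y'
      · subst h2
        rw [if_pos rfl]
        exact hkey S hS
      · rw [if_neg h2]
  refine dichotomy_aux μ hμ (x0, y) (x0, y') (fun z => (z.1, swap z.2)) ?_ ?_
    (fun _ => PMF.pure x0) (fun _ => PMF.pure y') ?_ ?_
  · intro S hS
    have hPr : (Prod.instMeasurableSpace : MeasurableSpace (X × Y)) =
        MeasurableSpace.comap Prod.fst inferInstance ⊔
          MeasurableSpace.comap Prod.snd inferInstance := rfl
    have hle : (Prod.instMeasurableSpace : MeasurableSpace (X × Y)) ≤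
        ({ MeasurableSet' := fun S => (fun z : X × Y => (z.1, swap z.2)) ⁻¹' S = S
           measurableSet_empty := by simp
           measurableSet_compl := fun E hE => by
             show (fun z : X × Y => (z.1, swap z.2)) ⁻¹' Eᶜ = Eᶜ
             rw [Set.preimage_compl]
             show ((fun z : X × Y => (z.1, swap z.2)) ⁻¹' E)ᶜ = Eᶜ
             rw [show (fun z : X × Y => (z.1, swap z.2)) ⁻¹' E = E from hE]
           measurableSet_iUnion := fun g hg => by
             show (fun z : X × Y => (z.1, swap z.2)) ⁻¹' (⋃ i, g i) = ⋃ i, g i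
             rw [Set.preimage_iUnion]; exact Set.iUnion_congr hg } :
          MeasurableSpace (X × Y)) := by
      rw [hPr]
      refine sup_le ?_ ?_
      · intro E hE
        rw [MeasurableSpace.measurableSet_comap] at hE
        obtain ⟨A, hA, rfl⟩ := hE
        rfl
      · intro E hE
        rw [MeasurableSpace.measurableSet_comap] at hE
        obtain ⟨A, hA, rfl⟩ := hE
        show (fun z : X × Y => (z.1, swap z.2)) ⁻¹' (Prod.snd ⁻¹' A) = Prod.snd ⁻¹' A
        ext z
        show swap z.2 ∈ A ↔ z.2 ∈ A
        conv_rhs => rw [← hswap_pre A hA]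
        exact Iff.rfl
    exact hle S hS
  · simp [hswap, hne.symm]
  · rw [cylProb_singleton]
    have h1 : (PMF.pure y' : PMF Y) y = 0 := by
      rw [PMF.pure_apply, if_neg hne]
    simp [h1]
  · rw [cylProb_singleton]
    simp [PMF.pure_apply]

end Dichotomy

end

end BWAux


open BWAux in
/-- The lower value with a Gδ bonus set equals the infimum of the lower values
over open supersets of the Gδ set. -/
theorem stmt_17 {X Y : Type} [Fintype X] [Nonempty X] [Fintype Y] [Nonempty Y]
    [MeasurableSpace X] [MeasurableSpace Y]
    [TopologicalSpace X] [DiscreteTopology X]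
    [TopologicalSpace Y] [DiscreteTopology Y]
    (μ : Strategy (X × Y) X → Strategy (X × Y) Y → Measure (Play (X × Y)))
    (hμ : ∀ σ τ, IsInduced σ τ (μ σ τ))
    (f : Play (X × Y) → ℝ) (hfm : Measurable f)
    (hfb : ∀ w, f w ∈ Set.Icc (0 : ℝ) 1)
    (D : Set (Play (X × Y))) (hD : IsGδ D) :
    (⨆ σ, ⨅ τ, ∫ w, max (f w) (D.indicator 1 w) ∂(μ σ τ)) =
      ⨅ O : {O : Set (Play (X × Y)) // IsOpen O ∧ D ⊆ O},
        ⨆ σ, ⨅ τ, ∫ w, max (f w) ((O : Set (Play (X × Y))).indicator 1 w) ∂(μ σ τ) := by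
  classical
  by_cases hXm : ∀ S : Set X, MeasurableSet S
  swap
  · exact (dichotomy_X μ hμ hXm).elim
  by_cases hYm : ∀ S : Set Y, MeasurableSet S
  swap
  · exact (dichotomy_Y μ hμ hYm).elim
  haveI : MeasurableSingletonClass X := ⟨fun x => hXm {x}⟩
  haveI : MeasurableSingletonClass Y := ⟨fun y => hYm {y}⟩
  have hDm : MeasurableSet D := isGδ_measurableSet hD
  -- extract a sequence of open supersets
  obtain ⟨V, hVo, hVD, hVI⟩ : ∃ V : ℕ → Set (Play (X × Y)),
      (∀ k, IsOpen (V k)) ∧ (∀ k, D ⊆ V k) ∧ (⋂ k, V k) ⊆ D := by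
    obtain ⟨T, hT1, hT2, hT3⟩ := hD
    rcases T.eq_empty_or_nonempty with rfl | hTne
    · refine ⟨fun _ => Set.univ, fun _ => isOpen_univ, fun _ => Set.subset_univ D, ?_⟩
      rw [hT3]; simp
    · obtain ⟨g, hg⟩ := Set.Countable.exists_eq_range hT2 hTne
      refine ⟨g, fun k => hT1 _ (by rw [hg]; exact Set.mem_range_self k), fun k => ?_, ?_⟩
      · rw [hT3, hg]
        intro w hw
        exact Set.mem_sInter.1 hw _ (Set.mem_range_self k)
      · rw [hT3, hg, Set.sInter_range]
  -- rewrite the payoffs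
  show (⨆ σ, ⨅ τ, ∫ w, payoff f D w ∂ μ σ τ) =
      ⨅ O : {O : Set (Play (X × Y)) // IsOpen O ∧ D ⊆ O},
        ⨆ σ, ⨅ τ, ∫ w, payoff f (O : Set (Play (X × Y))) w ∂ μ σ τ
  have hmem : ∀ (S : Set (Play (X × Y))), MeasurableSet S →
      ∀ (σ' : Strategy (X × Y) X) (τ' : Strategy (X × Y) Y),
      (∫ w, payoff f S w ∂ μ σ' τ') ∈ Set.Icc (0:ℝ) 1 := by
    intro S hSm σ' τ'
    haveI := (hμ σ' τ').1
    exact integral_mem_Icc _ (measurable_payoff hfm hSm) (payoff_mem_Icc hfb S)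
  have hlnil : ∀ g : Play (X × Y) → ℝ, lvalAt μ [] g = ⨆ σ, ⨅ τ, ∫ w, g w ∂ μ σ τ := by
    intro g
    unfold lvalAt
    simp only [prepend_nil]
  apply le_antisymm
  · -- easy direction
    haveI : Nonempty {O : Set (Play (X × Y)) // IsOpen O ∧ D ⊆ O} :=
      ⟨⟨Set.univ, isOpen_univ, Set.subset_univ D⟩⟩
    apply le_ciInf
    intro O
    apply ciSup_mono
    · refine ⟨1, ?_⟩
      rintro v ⟨σ', rfl⟩
      refine le_trans (ciInf_le ⟨0, ?_⟩ (Classical.arbitrary _)) ?_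
      · rintro u ⟨τ', rfl⟩
        exact (hmem O.1 (isOpen_measurableSet O.2.1) σ' τ').1
      · exact (hmem O.1 (isOpen_measurableSet O.2.1) σ' _).2
    · intro σ'
      apply ciInf_mono
      · refine ⟨0, ?_⟩
        rintro u ⟨τ', rfl⟩
        exact (hmem D hDm σ' τ').1
      · intro τ'
        haveI := (hμ σ' τ').1
        exact integral_mono
          (integrable_of_bounds (measurable_payoff hfm hDm) (payoff_mem_Icc hfb D))
          (integrable_of_bounds (measurable_payoff hfm (isOpen_measurableSet O.2.1))
            (payoff_mem_Icc hfb O.1))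
          (payoff_mono O.2.2)
  · -- hard direction
    have hRHS : (⨅ O : {O : Set (Play (X × Y)) // IsOpen O ∧ D ⊆ O},
        ⨆ σ, ⨅ τ, ∫ w, payoff f (O : Set (Play (X × Y))) w ∂ μ σ τ) = phi μ f D [] := by
      unfold phi
      exact iInf_congr (fun O => (hlnil (payoff f O.1)).symm)
    rw [hRHS]
    have key : ∀ ε : ℝ, 0 < ε →
        phi μ f D [] - ε ≤ ⨆ σ, ⨅ τ, ∫ w, payoff f D w ∂ μ σ τ := by
      intro ε hε
      obtain ⟨σs, hσs⟩ := hard_side μ hμ f D hfm hfb hDm V hVo hVD hVI hε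
      calc phi μ f D [] - ε ≤ ⨅ τ, ∫ w, payoff f D w ∂ μ σs τ :=
            le_ciInf (fun τ' => hσs τ')
        _ ≤ ⨆ σ, ⨅ τ, ∫ w, payoff f D w ∂ μ σ τ := by
            apply le_ciSup (f := fun σ : Strategy (X × Y) X =>
              ⨅ τ, ∫ w, payoff f D w ∂ μ σ τ) ⟨1, ?_⟩ σs
            rintro v ⟨σ', rfl⟩
            refine le_trans (ciInf_le ⟨0, ?_⟩ (Classical.arbitrary _)) ?_
            · rintro u ⟨τ', rfl⟩
              exact (hmem D hDm σ' τ').1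
            · exact (hmem D hDm σ' _).2
    have h2 : ∀ ε : ℝ, 0 < ε →
        phi μ f D [] ≤ (⨆ σ, ⨅ τ, ∫ w, payoff f D w ∂ μ σ τ) + ε := by
      intro ε hε
      linarith [key ε hε]
    exact le_of_forall_pos_le_add h2
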